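/- arXiv:1108.2079 — 10 statements merged into one kernel-verified Lean document; each statement's English description precedes it below -/
import Mathlib

section
/- Let ω : ℝ² → ℝ be compactly supported, square-integrable, and odd in each variable, i.e. ω(−x₁,x₂) = −ω(x₁,x₂) whenever x₁ ≠ 0 and ω(x₁,−x₂) = −ω(x₁,x₂) whenever x₂ ≠ 0. Let v = K * ω be the associated velocity field. Then: (1) v₂(x₁,0) = 0 for all x₁ ∈ ℝ; (2) v₁(0,x₂) = 0 for all x₂ ∈ ℝ; (3) v(0,0) = (0,0); and (4) if in addition ω(y) ≥ 0 for all y in the first quadrant Q₁ = {(y₁,y₂) : y₁ ≥ 0, y₂ ≥ 0}, then v₁(x₁,0) ≥ 0 for all x₁ ≥ 0. -/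
/-!
The reflections `y ↦ (-y₁, y₂)` and `y ↦ (y₁, -y₂)` preserve Lebesgue measure, flip the sign of `ω`
and act on the kernel by `K(-z₁, z₂) = (K₁ z, -K₂ z)`, `K(z₁, -z₂) = (-K₁ z, K₂ z)`. Changing
variables, the velocity inherits the symmetries `v(-x₁, x₂) = (-v₁ x, v₂ x)` and
`v(x₁, -x₂) = (v₁ x, -v₂ x)`, which on the axes force `v₂(x₁, 0) = 0` and `v₁(0, x₂) = 0`.

For the sign of `v₁(x₁, 0)`, sum the integrand over the four reflections of a point `(a, b)` of the
open first quadrant: the sum is `2 ω(a,b) (K₁((x₁,0) - (a,b)) - K₁((x₁,0) - (-a,b)))`, which is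
nonnegative because for `x₁ ≥ 0` the point `(a, b)` is at least as close to `(x₁, 0)` as `(-a, b)`.
-/

open MeasureTheory Real

/-- The Biot–Savart kernel on `ℝ²`: `K(x) = (1/(2π)) · (−x₂, x₁)/|x|²`. -/
noncomputable def biotSavartKernel (x : ℝ × ℝ) : ℝ × ℝ :=
  ((2 * Real.pi * (x.1 ^ 2 + x.2 ^ 2))⁻¹ * (-x.2),
   (2 * Real.pi * (x.1 ^ 2 + x.2 ^ 2))⁻¹ * x.1)

section Reflection

variable {E : Type*} [NormedAddCommGroup E]

theorem measurePreserving_neg_fst :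
    MeasurePreserving (fun y : ℝ × ℝ => (-y.1, y.2)) volume volume :=
  (Measure.measurePreserving_neg volume).prod (MeasurePreserving.id volume)

theorem measurePreserving_neg_snd :
    MeasurePreserving (fun y : ℝ × ℝ => (y.1, -y.2)) volume volume :=
  (MeasurePreserving.id volume).prod (Measure.measurePreserving_neg volume)

theorem integral_comp_neg_fst [NormedSpace ℝ E] (g : ℝ × ℝ → E) :
    ∫ y : ℝ × ℝ, g (-y.1, y.2) = ∫ y, g y :=
  measurePreserving_neg_fst.integral_comp' (f := (MeasurableEquiv.neg ℝ).prodCongr (.refl ℝ)) g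

theorem integral_comp_neg_snd [NormedSpace ℝ E] (g : ℝ × ℝ → E) :
    ∫ y : ℝ × ℝ, g (y.1, -y.2) = ∫ y, g y :=
  measurePreserving_neg_snd.integral_comp' (f := (MeasurableEquiv.refl ℝ).prodCongr (.neg ℝ)) g

theorem MeasureTheory.Integrable.comp_neg_fst {g : ℝ × ℝ → E} (hg : Integrable g) :
    Integrable fun y : ℝ × ℝ => g (-y.1, y.2) :=
  (measurePreserving_neg_fst.integrable_comp_emb
    ((MeasurableEquiv.neg ℝ).prodCongr (.refl ℝ)).measurableEmbedding).2 hg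

theorem MeasureTheory.Integrable.comp_neg_snd {g : ℝ × ℝ → E} (hg : Integrable g) :
    Integrable fun y : ℝ × ℝ => g (y.1, -y.2) :=
  (measurePreserving_neg_snd.integrable_comp_emb
    ((MeasurableEquiv.refl ℝ).prodCongr (.neg ℝ)).measurableEmbedding).2 hg

end Reflection

theorem ae_fst_ne_zero : ∀ᵐ y : ℝ × ℝ, y.1 ≠ 0 :=
  Measure.quasiMeasurePreserving_fst.ae (Measure.ae_ne volume 0)

theorem ae_snd_ne_zero : ∀ᵐ y : ℝ × ℝ, y.2 ≠ 0 :=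
  Measure.quasiMeasurePreserving_snd.ae (Measure.ae_ne volume 0)

theorem integral_add_comp_neg_fst {f : ℝ × ℝ → ℝ} (hf : Integrable f) :
    ∫ y : ℝ × ℝ, (f y + f (-y.1, y.2)) = 2 * ∫ y, f y := by
  rw [integral_add hf hf.comp_neg_fst, integral_comp_neg_fst]
  ring

theorem integral_add_comp_neg_snd {f : ℝ × ℝ → ℝ} (hf : Integrable f) :
    ∫ y : ℝ × ℝ, (f y + f (y.1, -y.2)) = 2 * ∫ y, f y := by
  rw [integral_add hf hf.comp_neg_snd, integral_comp_neg_snd]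
  ring

theorem integral_nonneg_of_reflection_sum_nonneg {f : ℝ × ℝ → ℝ} (hf : Integrable f)
    (h : ∀ a b : ℝ, 0 < a → 0 < b → 0 ≤ f (a, b) + f (-a, b) + (f (a, -b) + f (-a, -b))) :
    0 ≤ ∫ y, f y := by
  set F : ℝ × ℝ → ℝ := fun y => f y + f (-y.1, y.2) + (f (y.1, -y.2) + f (-y.1, -y.2))
  have hF : ∫ y, F y = 4 * ∫ y, f y := by
    rw [integral_add_comp_neg_snd (f := fun y => f y + f (-y.1, y.2)) (hf.add hf.comp_neg_fst),
      integral_add_comp_neg_fst hf]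
    ring
  have hF_abs : ∀ y : ℝ × ℝ, F y = F (|y.1|, |y.2|) := by
    intro y
    rcases abs_choice y.1 with h₁ | h₁ <;> rcases abs_choice y.2 with h₂ | h₂ <;>
      simp only [F, h₁, h₂, neg_neg] <;> ring
  have hF_nonneg : ∀ᵐ y : ℝ × ℝ, 0 ≤ F y := by
    filter_upwards [ae_fst_ne_zero, ae_snd_ne_zero] with y h₁ h₂
    rw [hF_abs]
    exact h _ _ (abs_pos.2 h₁) (abs_pos.2 h₂)
  linarith [integral_nonneg_of_ae hF_nonneg]

theorem biotSavartKernel_neg_fst (z : ℝ × ℝ) :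
    biotSavartKernel (-z.1, z.2) = ((biotSavartKernel z).1, -(biotSavartKernel z).2) := by
  simp only [biotSavartKernel, neg_sq, mul_neg]

theorem biotSavartKernel_neg_snd (z : ℝ × ℝ) :
    biotSavartKernel (z.1, -z.2) = (-(biotSavartKernel z).1, (biotSavartKernel z).2) := by
  simp only [biotSavartKernel, neg_sq, mul_neg, neg_neg]

theorem biotSavartKernel_fst_sub_le {x₁ a b : ℝ} (hx₁ : 0 ≤ x₁) (ha : 0 ≤ a) (hb : 0 < b) :
    (biotSavartKernel ((x₁, 0) - (-a, b))).1 ≤ (biotSavartKernel ((x₁, 0) - (a, b))).1 := by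
  simp only [biotSavartKernel, Prod.mk_sub_mk, zero_sub, neg_neg, neg_sq, sub_neg_eq_add]
  gcongr (2 * π * (?_ + b ^ 2))⁻¹ * b
  nlinarith

noncomputable def biotSavart (ω : ℝ × ℝ → ℝ) (x : ℝ × ℝ) : ℝ × ℝ :=
  ∫ y, ω y • biotSavartKernel (x - y)

section BiotSavart

variable {ω : ℝ × ℝ → ℝ}

theorem biotSavart_neg_fst (hodd : ∀ a b : ℝ, a ≠ 0 → ω (-a, b) = -ω (a, b)) (x : ℝ × ℝ) :
    biotSavart ω (-x.1, x.2) = (-(biotSavart ω x).1, (biotSavart ω x).2) := by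
  let R : (ℝ × ℝ) ≃L[ℝ] ℝ × ℝ := (ContinuousLinearEquiv.neg ℝ).prodCongr (.refl ℝ ℝ)
  have hR : ∀ᵐ y : ℝ × ℝ, ω (-y.1, y.2) • biotSavartKernel ((-x.1, x.2) - (-y.1, y.2)) =
      R (ω y • biotSavartKernel (x - y)) := by
    filter_upwards [ae_fst_ne_zero] with y hy
    have hsub : ((-x.1, x.2) - (-y.1, y.2) : ℝ × ℝ) = (-(x - y).1, (x - y).2) :=
      Prod.ext (by simp only [Prod.fst_sub]; ring) rfl
    rw [hsub, biotSavartKernel_neg_fst, hodd _ _ hy]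
    simp [R]
  rw [biotSavart, ← integral_comp_neg_fst, integral_congr_ae hR, R.integral_comp_comm]
  rfl

theorem biotSavart_neg_snd (hodd : ∀ a b : ℝ, b ≠ 0 → ω (a, -b) = -ω (a, b)) (x : ℝ × ℝ) :
    biotSavart ω (x.1, -x.2) = ((biotSavart ω x).1, -(biotSavart ω x).2) := by
  let R : (ℝ × ℝ) ≃L[ℝ] ℝ × ℝ := (ContinuousLinearEquiv.refl ℝ ℝ).prodCongr (.neg ℝ)
  have hR : ∀ᵐ y : ℝ × ℝ, ω (y.1, -y.2) • biotSavartKernel ((x.1, -x.2) - (y.1, -y.2)) =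
      R (ω y • biotSavartKernel (x - y)) := by
    filter_upwards [ae_snd_ne_zero] with y hy
    have hsub : ((x.1, -x.2) - (y.1, -y.2) : ℝ × ℝ) = ((x - y).1, -(x - y).2) :=
      Prod.ext rfl (by simp only [Prod.snd_sub]; ring)
    rw [hsub, biotSavartKernel_neg_snd, hodd _ _ hy]
    simp [R]
  rw [biotSavart, ← integral_comp_neg_snd, integral_congr_ae hR, R.integral_comp_comm]
  rfl

theorem biotSavart_snd_mk_zero
    (hodd : ∀ a b : ℝ, b ≠ 0 → ω (a, -b) = -ω (a, b)) (x₁ : ℝ) :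
    (biotSavart ω (x₁, 0)).2 = 0 :=
  self_eq_neg.mp (by simpa using congrArg Prod.snd (biotSavart_neg_snd hodd (x₁, 0)))

theorem biotSavart_fst_zero_mk
    (hodd : ∀ a b : ℝ, a ≠ 0 → ω (-a, b) = -ω (a, b)) (x₂ : ℝ) :
    (biotSavart ω (0, x₂)).1 = 0 :=
  self_eq_neg.mp (by simpa using congrArg Prod.fst (biotSavart_neg_fst hodd (0, x₂)))

theorem biotSavart_fst_mk_zero_nonneg
    (hodd₁ : ∀ a b : ℝ, a ≠ 0 → ω (-a, b) = -ω (a, b))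
    (hodd₂ : ∀ a b : ℝ, b ≠ 0 → ω (a, -b) = -ω (a, b))
    (hpos : ∀ y : ℝ × ℝ, 0 ≤ y.1 → 0 ≤ y.2 → 0 ≤ ω y) {x₁ : ℝ} (hx₁ : 0 ≤ x₁) :
    0 ≤ (biotSavart ω (x₁, 0)).1 := by
  by_cases hg : Integrable fun y => ω y • biotSavartKernel ((x₁, 0) - y)
  swap
  · simp [biotSavart, integral_undef hg]
  rw [biotSavart, fst_integral hg]
  refine integral_nonneg_of_reflection_sum_nonneg hg.fst fun a b ha hb => ?_
  have hω : ω (-a, -b) = ω (a, b) := by rw [hodd₂ _ _ hb.ne', hodd₁ _ _ ha.ne', neg_neg]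
  refine (mul_nonneg (mul_nonneg zero_le_two (hpos (a, b) ha.le hb.le))
    (sub_nonneg.2 (biotSavartKernel_fst_sub_le hx₁ ha.le hb))).trans_eq ?_
  simp only [Prod.smul_fst, smul_eq_mul, hω, hodd₁ _ _ ha.ne', hodd₂ _ _ hb.ne',
    biotSavartKernel, Prod.mk_sub_mk]
  ring

end BiotSavart

theorem stmt0_general (ω : ℝ × ℝ → ℝ)
    (hodd1 : ∀ x₁ x₂ : ℝ, x₁ ≠ 0 → ω (-x₁, x₂) = -ω (x₁, x₂))
    (hodd2 : ∀ x₁ x₂ : ℝ, x₂ ≠ 0 → ω (x₁, -x₂) = -ω (x₁, x₂))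
    (v : ℝ × ℝ → ℝ × ℝ)
    (hv : ∀ x : ℝ × ℝ, v x = ∫ y : ℝ × ℝ, ω y • biotSavartKernel (x - y)) :
    (∀ x₁ : ℝ, (v (x₁, 0)).2 = 0) ∧
    (∀ x₂ : ℝ, (v (0, x₂)).1 = 0) ∧
    v (0, 0) = (0, 0) ∧
    ((∀ y : ℝ × ℝ, 0 ≤ y.1 → 0 ≤ y.2 → 0 ≤ ω y) →
      ∀ x₁ : ℝ, 0 ≤ x₁ → 0 ≤ (v (x₁, 0)).1) := by
  obtain rfl : v = biotSavart ω := funext hv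
  exact ⟨biotSavart_snd_mk_zero hodd2, biotSavart_fst_zero_mk hodd1,
    Prod.ext (biotSavart_fst_zero_mk hodd1 0) (biotSavart_snd_mk_zero hodd2 0),
    fun hpos _ hx₁ => biotSavart_fst_mk_zero_nonneg hodd1 hodd2 hpos hx₁⟩

theorem stmt0 (ω : ℝ × ℝ → ℝ) (hsupp : HasCompactSupport ω)
    (hL2 : MemLp ω 2 (volume : Measure (ℝ × ℝ)))
    (hodd1 : ∀ x₁ x₂ : ℝ, x₁ ≠ 0 → ω (-x₁, x₂) = -ω (x₁, x₂))
    (hodd2 : ∀ x₁ x₂ : ℝ, x₂ ≠ 0 → ω (x₁, -x₂) = -ω (x₁, x₂))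
    (v : ℝ × ℝ → ℝ × ℝ)
    (hv : ∀ x : ℝ × ℝ, v x = ∫ y : ℝ × ℝ, ω y • biotSavartKernel (x - y)) :
    (∀ x₁ : ℝ, (v (x₁, 0)).2 = 0) ∧
    (∀ x₂ : ℝ, (v (0, x₂)).1 = 0) ∧
    v (0, 0) = (0, 0) ∧
    ((∀ y : ℝ × ℝ, 0 ≤ y.1 → 0 ≤ y.2 → 0 ≤ ω y) →
      ∀ x₁ : ℝ, 0 ≤ x₁ → 0 ≤ (v (x₁, 0)).1) :=
  stmt0_general ω hodd1 hodd2 v hv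
end

section
/- For every λ ∈ (0,1) there exists c > 0, depending only on λ, with the following property: for every r ∈ (0,1), let ω : ℝ² → ℝ be given by ω(x) = 2π·sgn(x₁)·sgn(x₂) when max(|x₁|,|x₂|) ≤ r and ω(x) = 0 otherwise (so ω equals 2π·1_{[0,r]×[0,r]} on the first quadrant and is odd in each variable), and let v = K * ω. Then v₁(x₁,0) ≥ 2(1−λ)·x₁·log(1/x₁) for all x₁ ∈ (0, r^{1/λ}] with x₁ < c. -/
open MeasureTheory Real

/-!
At `x = (x₁, 0)` the first velocity component is
`∫_{[-r,r]²} sgn y₁ · |y₂| / ((x₁ - y₁)² + y₂²) dy`. Integrating out `y₂` gives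
`sgn y₁ · g(x₁ - y₁)` with `g = logKernel r`, and since `g` is even the remaining integral
collapses to `∫_{-x₁}^{x₁} g - ∫_{r-x₁}^{r+x₁} g`. The first term is at least
`4 x₁ log (r / x₁)` and, once `x₁ ≤ r / 2`, the second is at most `2 x₁ log 5`. The constraint
`x₁ ≤ r^{1/λ}` turns `log (r / x₁)` into at least `(1 - λ) log (1 / x₁)`, and `x₁ < c` makes this
dominate `log 5`. The second velocity component only has to be integrable, which follows from
`∫ |a| / (a² + t²) dt ≤ π`.
-/

open Set intervalIntegral

namespace Real

@[fun_prop]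
lemma measurable_sign : Measurable Real.sign :=
  Measurable.ite measurableSet_Iio measurable_const
    (Measurable.ite measurableSet_Ioi measurable_const measurable_const)

lemma sign_mul_self_eq_abs (y : ℝ) : Real.sign y * y = |y| := by
  rcases lt_trichotomy y 0 with h | rfl | h
  · rw [sign_of_neg h, abs_of_neg h, neg_one_mul]
  · simp
  · rw [sign_of_pos h, abs_of_pos h, one_mul]

lemma abs_sign_le_one (y : ℝ) : |Real.sign y| ≤ 1 := by
  rcases sign_apply_eq y with h | h | h <;> simp [h]

lemma abs_sign_mul_le (y z : ℝ) : |Real.sign y * z| ≤ |z| := by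
  rw [abs_mul]
  exact mul_le_of_le_one_left (abs_nonneg z) (abs_sign_le_one y)

end Real

lemma integrable_prod_of_integral_norm_le {α β E : Type*} [MeasurableSpace α]
    [MeasurableSpace β] [NormedAddCommGroup E] {μ : Measure α} {ν : Measure β} [SFinite ν]
    {f : α × β → E} {h : α → ℝ} (hf : AEStronglyMeasurable f (μ.prod ν))
    (hslice : ∀ᵐ a ∂μ, Integrable (fun b ↦ f (a, b)) ν) (hh : Integrable h μ)
    (hle : ∀ᵐ a ∂μ, ∫ b, ‖f (a, b)‖ ∂ν ≤ h a) : Integrable f (μ.prod ν) := by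
  refine (integrable_prod_iff hf).2 ⟨hslice, hh.mono' hf.norm.integral_prod_right' ?_⟩
  filter_upwards [hle] with a ha
  rwa [norm_of_nonneg (integral_nonneg fun _ ↦ norm_nonneg _)]

lemma continuous_mul_inv_sq_add_sq {a : ℝ} (ha : a ≠ 0) {f : ℝ → ℝ} (hf : Continuous f) :
    Continuous fun t ↦ f t * (a ^ 2 + t ^ 2)⁻¹ :=
  hf.mul <| Continuous.inv₀ (by fun_prop) fun t ↦ by positivity

lemma setIntegral_Icc_abs_mul_inv_sq_add_sq_le_pi (a : ℝ) {r : ℝ} (hr : 0 ≤ r) :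
    ∫ t in Icc (-r) r, |a| * (a ^ 2 + t ^ 2)⁻¹ ≤ π := by
  rw [integral_Icc_eq_integral_Ioc, ← integral_of_le (by linarith)]
  rcases eq_or_ne a 0 with rfl | ha
  · simp [pi_pos.le]
  have hderiv : ∀ t ∈ uIcc (-r) r,
      HasDerivAt (fun t ↦ arctan (t / |a|)) (|a| * (a ^ 2 + t ^ 2)⁻¹) t := by
    intro t _
    refine ((hasDerivAt_id t).div_const |a|).arctan.congr_deriv ?_
    have : 0 < |a| := abs_pos.2 ha
    field_simp
    simp
  rw [integral_eq_sub_of_hasDerivAt hderiv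
    ((continuous_mul_inv_sq_add_sq ha continuous_const).intervalIntegrable _ _)]
  linarith [arctan_lt_pi_div_two (r / |a|), neg_pi_div_two_lt_arctan (-r / |a|)]

noncomputable def logKernel (r u : ℝ) : ℝ := log (u ^ 2 + r ^ 2) - log (u ^ 2)

lemma setIntegral_Icc_abs_mul_inv_sq_add_sq {a : ℝ} (ha : a ≠ 0) {r : ℝ} (hr : 0 ≤ r) :
    ∫ t in Icc (-r) r, |t| * (a ^ 2 + t ^ 2)⁻¹ = logKernel r a := by
  have habs := continuous_mul_inv_sq_add_sq ha continuous_abs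
  have hderiv : ∀ t ∈ uIcc 0 r,
      HasDerivAt (fun t ↦ log (a ^ 2 + t ^ 2) / 2) (t * (a ^ 2 + t ^ 2)⁻¹) t := by
    intro t _
    refine (((hasDerivAt_pow 2 t).const_add (a ^ 2)).log (by positivity)).div_const 2
      |>.congr_deriv ?_
    field_simp
    ring
  have hsymm : ∫ t in -r..0, |t| * (a ^ 2 + t ^ 2)⁻¹ = ∫ t in 0..r, |t| * (a ^ 2 + t ^ 2)⁻¹ := by
    have h := integral_comp_neg (a := 0) (b := r) fun t ↦ |t| * (a ^ 2 + t ^ 2)⁻¹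
    rw [neg_zero] at h
    rw [← h]
    simp only [abs_neg, even_two.neg_pow]
  have hpos : ∫ t in 0..r, |t| * (a ^ 2 + t ^ 2)⁻¹ = ∫ t in 0..r, t * (a ^ 2 + t ^ 2)⁻¹ :=
    integral_congr fun t ht ↦ by rw [uIcc_of_le hr] at ht; rw [abs_of_nonneg ht.1]
  rw [integral_Icc_eq_integral_Ioc, ← integral_of_le (by linarith),
    ← integral_add_adjacent_intervals (habs.intervalIntegrable _ 0) (habs.intervalIntegrable 0 _),
    hsymm, hpos, integral_eq_sub_of_hasDerivAt hderiv
      ((continuous_mul_inv_sq_add_sq ha continuous_id).intervalIntegrable 0 r), logKernel]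
  simp
  ring

lemma logKernel_neg (r u : ℝ) : logKernel r (-u) = logKernel r u := by
  simp [logKernel]

lemma intervalIntegrable_logKernel {r : ℝ} (hr : r ≠ 0) (a b : ℝ) :
    IntervalIntegrable (logKernel r) volume a b := by
  have hcont : Continuous fun u : ℝ ↦ log (u ^ 2 + r ^ 2) :=
    Continuous.log (by fun_prop) fun u ↦ by positivity
  have hlog : IntervalIntegrable (fun u : ℝ ↦ log (u ^ 2)) volume a b := by
    simpa only [log_pow] using intervalIntegrable_log'.const_mul (2 : ℕ)
  exact (hcont.intervalIntegrable a b).sub hlog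

lemma two_mul_log_sub_log_le_logKernel {r x u : ℝ} (hr : r ≠ 0) (hu : u ≠ 0) (hux : |u| ≤ x) :
    2 * (log r - log x) ≤ logKernel r u := by
  have h₁ : log (r ^ 2) ≤ log (u ^ 2 + r ^ 2) :=
    log_le_log (by positivity) (by nlinarith [sq_nonneg u])
  have h₂ : log |u| ≤ log x := log_le_log (abs_pos.2 hu) hux
  have h₃ : log (u ^ 2) = 2 * log |u| := by rw [← sq_abs, log_pow, Nat.cast_ofNat]
  have h₄ : log (r ^ 2) = 2 * log r := by rw [log_pow, Nat.cast_ofNat]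
  rw [logKernel]
  linarith

lemma logKernel_le_log_five {r u : ℝ} (hu : u ≠ 0) (hru : |r| ≤ 2 * |u|) :
    logKernel r u ≤ log 5 := by
  have h : u ^ 2 + r ^ 2 ≤ 5 * u ^ 2 := by
    nlinarith [sq_abs r, sq_abs u, abs_nonneg r]
  have := log_le_log (by positivity) h
  rw [log_mul (by norm_num) (by positivity)] at this
  rw [logKernel]
  linarith

lemma mul_log_sub_log_le_integral_logKernel {r x : ℝ} (hr : r ≠ 0) (hx : 0 ≤ x) :
    4 * x * (log r - log x) ≤ ∫ u in -x..x, logKernel r u := by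
  have hconst : ∫ _ in -x..x, 2 * (log r - log x) = 4 * x * (log r - log x) := by
    simp only [intervalIntegral.integral_const, smul_eq_mul]
    ring
  rw [← hconst]
  refine integral_mono_ae_restrict (by linarith) intervalIntegrable_const
    (intervalIntegrable_logKernel hr _ _) ?_
  filter_upwards [ae_restrict_mem measurableSet_Icc, ae_restrict_of_ae (Measure.ae_ne volume 0)]
    with u hu hu0
  exact two_mul_log_sub_log_le_logKernel hr hu0 (abs_le.2 hu)

lemma integral_logKernel_le {r x : ℝ} (hr : 0 < r) (hx : 0 ≤ x) (hxr : x ≤ r / 2) :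
    ∫ u in r - x..r + x, logKernel r u ≤ 2 * x * log 5 := by
  have hconst : ∫ _ in r - x..r + x, log 5 = 2 * x * log 5 := by
    simp only [intervalIntegral.integral_const, smul_eq_mul]
    ring
  rw [← hconst]
  refine integral_mono_on (by linarith) (intervalIntegrable_logKernel hr.ne' _ _)
    intervalIntegrable_const fun u hu ↦ logKernel_le_log_five (by linarith [hu.1]) ?_
  rw [abs_of_pos hr, abs_of_pos (by linarith [hu.1])]
  linarith [hu.1]

lemma integral_sign_mul_comp_sub_of_even {f : ℝ → ℝ} (heven : ∀ u, f (-u) = f u)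
    (hf : ∀ a b, IntervalIntegrable f volume a b) (x : ℝ) {r : ℝ} (hr : 0 ≤ r) :
    ∫ y in -r..r, Real.sign y * f (x - y) = (∫ u in -x..x, f u) - ∫ u in r - x..r + x, f u := by
  have hsub : ∀ a b, IntervalIntegrable (fun y ↦ f (x - y)) volume a b := fun a b ↦ by
    simpa using (hf (x - a) (x - b)).comp_sub_left x
  have hsign : ∀ a b, IntervalIntegrable (fun y ↦ Real.sign y * f (x - y)) volume a b :=
    fun a b ↦ ⟨(hsub a b).1.bdd_mul Real.measurable_sign.aestronglyMeasurable
      (ae_of_all _ Real.abs_sign_le_one), (hsub a b).2.bdd_mul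
      Real.measurable_sign.aestronglyMeasurable (ae_of_all _ Real.abs_sign_le_one)⟩
  have hpos : ∀ g : ℝ → ℝ, ∫ y in 0..r, Real.sign y * g y = ∫ y in 0..r, g y := fun g ↦
    integral_congr_ae (ae_of_all _ fun y hy ↦ by
      rw [uIoc_of_le hr] at hy
      rw [Real.sign_of_pos hy.1, one_mul])
  have hneg :
      ∫ y in -r..0, Real.sign y * f (x - y) = -∫ y in 0..r, Real.sign y * f (x + y) := by
    rw [← intervalIntegral.integral_neg]
    simpa [Real.sign_neg, sub_neg_eq_add] using
      (integral_comp_neg (a := 0) (b := r) fun y ↦ Real.sign y * f (x - y)).symm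
  have hreflect : ∫ y in 0..r, f (x - y) = ∫ u in -x..r - x, f u := by
    have h := integral_comp_neg (a := -x) (b := r - x) f
    simp only [heven, neg_neg, neg_sub] at h
    rw [integral_comp_sub_left, sub_zero, h]
  rw [← integral_add_adjacent_intervals (hsign _ 0) (hsign 0 _), hneg, hpos, hpos, hreflect,
    integral_comp_add_left, add_zero, add_comm r x, neg_add_eq_sub,
    integral_interval_sub_interval_comm (hf _ _) (hf _ _) (hf _ _)]

noncomputable def squareVorticity (r : ℝ) (x : ℝ × ℝ) : ℝ :=
  if max |x.1| |x.2| ≤ r then 2 * π * Real.sign x.1 * Real.sign x.2 else 0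

lemma squareVorticity_smul_biotSavartKernel (r x₁ : ℝ) (y : ℝ × ℝ) :
    squareVorticity r y • biotSavartKernel ((x₁, 0) - y) =
      (Icc (-r) r ×ˢ Icc (-r) r).indicator (fun y ↦
        (Real.sign y.1 * (|y.2| * ((x₁ - y.1) ^ 2 + y.2 ^ 2)⁻¹),
          Real.sign y.1 * Real.sign y.2 * ((x₁ - y.1) * ((x₁ - y.1) ^ 2 + y.2 ^ 2)⁻¹))) y := by
  have hsq : y ∈ Icc (-r) r ×ˢ Icc (-r) r ↔ max |y.1| |y.2| ≤ r := by
    simp only [mem_prod, mem_Icc, max_le_iff, abs_le]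
  by_cases hy : y ∈ Icc (-r) r ×ˢ Icc (-r) r
  · have hπ : 2 * π ≠ 0 := by positivity
    rw [indicator_of_mem hy, squareVorticity, if_pos (hsq.1 hy), biotSavartKernel]
    simp only [Prod.fst_sub, Prod.snd_sub, Prod.smul_mk, smul_eq_mul, zero_sub, neg_neg,
      even_two.neg_pow, mul_inv, ← Real.sign_mul_self_eq_abs y.2]
    ext <;> field_simp
  · rw [indicator_of_notMem hy, squareVorticity, if_neg (mt hsq.2 hy), zero_smul]

lemma integrable_velocity_fst {r : ℝ} (hr : 0 < r) (x₁ : ℝ) :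
    Integrable (fun y : ℝ × ℝ ↦ Real.sign y.1 * (|y.2| * ((x₁ - y.1) ^ 2 + y.2 ^ 2)⁻¹))
      ((volume.restrict (Icc (-r) r)).prod (volume.restrict (Icc (-r) r))) := by
  have hslice : ∀ y₁ ≠ x₁,
      IntegrableOn (fun t ↦ |t| * ((x₁ - y₁) ^ 2 + t ^ 2)⁻¹) (Icc (-r) r) := fun y₁ hy₁ ↦
    (continuous_mul_inv_sq_add_sq (sub_ne_zero.2 hy₁.symm) continuous_abs).integrableOn_Icc
  have hne : ∀ᵐ y₁ ∂volume.restrict (Icc (-r) r), y₁ ≠ x₁ :=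
    ae_restrict_of_ae (Measure.ae_ne volume x₁)
  refine integrable_prod_of_integral_norm_le (h := fun y₁ ↦ logKernel r (x₁ - y₁))
    (by fun_prop) ?_ ?_ ?_
  · filter_upwards [hne] with y₁ hy₁
    exact (hslice y₁ hy₁).const_mul _
  · refine (intervalIntegrable_iff_integrableOn_Icc_of_le
      (f := fun y₁ ↦ logKernel r (x₁ - y₁)) (by linarith)).1 ?_
    simpa using (intervalIntegrable_logKernel hr.ne' (x₁ + r) (x₁ - r)).comp_sub_left x₁
  · filter_upwards [hne] with y₁ hy₁
    calc ∫ t in Icc (-r) r, ‖Real.sign y₁ * (|t| * ((x₁ - y₁) ^ 2 + t ^ 2)⁻¹)‖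
        ≤ ∫ t in Icc (-r) r, |t| * ((x₁ - y₁) ^ 2 + t ^ 2)⁻¹ :=
          integral_mono ((hslice y₁ hy₁).const_mul _).norm (hslice y₁ hy₁) fun t ↦
            (Real.abs_sign_mul_le _ _).trans_eq (abs_of_nonneg (by positivity))
      _ = logKernel r (x₁ - y₁) :=
          setIntegral_Icc_abs_mul_inv_sq_add_sq (sub_ne_zero.2 hy₁.symm) hr.le

lemma integrable_velocity_snd {r : ℝ} (hr : 0 ≤ r) (x₁ : ℝ) :
    Integrable (fun y : ℝ × ℝ ↦
        Real.sign y.1 * Real.sign y.2 * ((x₁ - y.1) * ((x₁ - y.1) ^ 2 + y.2 ^ 2)⁻¹))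
      ((volume.restrict (Icc (-r) r)).prod (volume.restrict (Icc (-r) r))) := by
  have hslice : ∀ y₁ ≠ x₁, IntegrableOn
      (fun t ↦ |x₁ - y₁| * ((x₁ - y₁) ^ 2 + t ^ 2)⁻¹) (Icc (-r) r) := fun y₁ hy₁ ↦
    (continuous_mul_inv_sq_add_sq (sub_ne_zero.2 hy₁.symm) continuous_const).integrableOn_Icc
  have hle : ∀ y₁ t : ℝ,
      ‖Real.sign y₁ * Real.sign t * ((x₁ - y₁) * ((x₁ - y₁) ^ 2 + t ^ 2)⁻¹)‖ ≤
        |x₁ - y₁| * ((x₁ - y₁) ^ 2 + t ^ 2)⁻¹ := fun y₁ t ↦ by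
    rw [Real.norm_eq_abs, mul_assoc]
    refine ((Real.abs_sign_mul_le _ _).trans (Real.abs_sign_mul_le _ _)).trans_eq ?_
    rw [abs_mul, abs_of_nonneg (by positivity : (0 : ℝ) ≤ ((x₁ - y₁) ^ 2 + t ^ 2)⁻¹)]
  have hne : ∀ᵐ y₁ ∂volume.restrict (Icc (-r) r), y₁ ≠ x₁ :=
    ae_restrict_of_ae (Measure.ae_ne volume x₁)
  refine integrable_prod_of_integral_norm_le (h := fun _ ↦ π) (by fun_prop) ?_
    (integrable_const π) ?_
  · filter_upwards [hne] with y₁ hy₁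
    exact (hslice y₁ hy₁).mono' (by fun_prop) (ae_of_all _ (hle y₁))
  · filter_upwards [hne] with y₁ hy₁
    calc ∫ t in Icc (-r) r,
          ‖Real.sign y₁ * Real.sign t * ((x₁ - y₁) * ((x₁ - y₁) ^ 2 + t ^ 2)⁻¹)‖
        ≤ ∫ t in Icc (-r) r, |x₁ - y₁| * ((x₁ - y₁) ^ 2 + t ^ 2)⁻¹ :=
          integral_mono ((hslice y₁ hy₁).mono' (by fun_prop) (ae_of_all _ (hle y₁))).norm
            (hslice y₁ hy₁) (hle y₁)
      _ ≤ π := setIntegral_Icc_abs_mul_inv_sq_add_sq_le_pi _ hr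

lemma fst_integral_squareVorticity_smul_biotSavartKernel {r : ℝ} (hr : 0 < r) (x₁ : ℝ) :
    (∫ y, squareVorticity r y • biotSavartKernel ((x₁, 0) - y)).1 =
      ∫ y₁ in -r..r, Real.sign y₁ * logKernel r (x₁ - y₁) := by
  simp_rw [squareVorticity_smul_biotSavartKernel]
  rw [MeasureTheory.integral_indicator (measurableSet_Icc.prod measurableSet_Icc),
    Measure.volume_eq_prod, ← Measure.prod_restrict,
    integral_pair (integrable_velocity_fst hr x₁) (integrable_velocity_snd hr.le x₁),
    integral_prod _ (integrable_velocity_fst hr x₁), integral_of_le (by linarith),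
    ← integral_Icc_eq_integral_Ioc]
  refine integral_congr_ae ?_
  filter_upwards [ae_restrict_of_ae (Measure.ae_ne volume x₁)] with y₁ hy₁
  rw [MeasureTheory.integral_const_mul,
    setIntegral_Icc_abs_mul_inv_sq_add_sq (sub_ne_zero.2 hy₁.symm) hr.le]

theorem stmt1 (lam : ℝ) (hlam : lam ∈ Set.Ioo (0:ℝ) 1) :
    ∃ c > 0, ∀ r ∈ Set.Ioo (0:ℝ) 1, ∀ ω : ℝ × ℝ → ℝ,
      (∀ x : ℝ × ℝ, ω x =
        if max |x.1| |x.2| ≤ r then 2 * Real.pi * Real.sign x.1 * Real.sign x.2 else 0) →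
      ∀ v : ℝ × ℝ → ℝ × ℝ,
        (∀ x : ℝ × ℝ, v x = ∫ y : ℝ × ℝ, ω y • biotSavartKernel (x - y)) →
        ∀ x₁ : ℝ, x₁ ∈ Set.Ioc 0 (r ^ (1 / lam)) → x₁ < c →
          2 * (1 - lam) * x₁ * Real.log (1 / x₁) ≤ (v (x₁, 0)).1 := by
  obtain ⟨hlam₀, hlam₁⟩ := hlam
  refine ⟨exp (-log 5 / (1 - lam)), exp_pos _, ?_⟩
  rintro r ⟨hr, -⟩ ω hω v hv x₁ ⟨hx, hxr⟩ hxc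
  obtain rfl : ω = squareVorticity r := funext hω
  have hlog_r : lam * log x₁ ≤ log r := by
    have := log_le_log hx hxr
    rw [log_rpow hr] at this
    field_simp at this ⊢
    linarith
  have hlog_five : log 5 < (1 - lam) * -log x₁ := by
    have := log_lt_log hx hxc
    rw [log_exp, lt_div_iff₀ (by linarith)] at this
    linarith
  have hx_half : x₁ ≤ r / 2 := by
    have : log 2 < log 5 := log_lt_log two_pos (by norm_num)
    refine ((log_lt_log_iff hx (by positivity)).1 ?_).le
    rw [log_div hr.ne' two_ne_zero]
    linarith
  have hnear := mul_log_sub_log_le_integral_logKernel hr.ne' hx.le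
  have hfar := integral_logKernel_le hr hx.le hx_half
  rw [hv, fst_integral_squareVorticity_smul_biotSavartKernel hr, integral_sign_mul_comp_sub_of_even
    (logKernel_neg r) (intervalIntegrable_logKernel hr.ne') _ hr.le, one_div, log_inv]
  nlinarith
end

section
/- Let ω : ℝ² → ℝ be defined by ω(x) = sgn(x₁)·sgn(x₂)·log(log(1/m(x))) when 0 < m(x) < 1/e, where m(x) = max(|x₁|,|x₂|), and ω(x) = 0 otherwise. Then ∫_{ℝ²} |ω(x)|^p dx = 8 ∫₁^∞ e^{−2u} (log u)^p du for every p ≥ 1, and there exists p₀ such that for all p ≥ p₀: 4·e^{−2p}·(log p)^p ≤ ∫_{ℝ²} |ω(x)|^p dx ≤ 8·(log p)^p. In particular, the L^p norm of ω is comparable to log p for large p: e^{−2}·log p ≲ ‖ω‖_{L^p(ℝ²)} ≲ log p. -/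
/-!
Off the coordinate axes, `|ω x|` depends only on the sup norm `‖x‖ = m(x)`, and the
sup-norm ball of radius `r` in `ℝ²` has area `4r²`; hence
`∫ |ω|^p = 8 ∫₀^{1/e} r (log log (1/r))^p dr`, and the substitution `r = e^{-u}` turns this into
`8 ∫₁^∞ e^{-2u} (log u)^p du`.
For the bounds, restricting to `u > p` gives the lower one, while the tangent lines of the
concave function `log` at `p` and at `log p` give `(log u)^p ≤ e^u (log p)^p`,
whence the upper one. Taking `p`-th roots uses `4 ≥ 1` and `8 ≤ 2^p`.
-/

open MeasureTheory Real

/-- `m(x) = max(|x₁|, |x₂|)`. -/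
noncomputable def mfun (x : ℝ × ℝ) : ℝ := max |x.1| |x.2|

/-- The vorticity `ω(x) = sgn(x₁)·sgn(x₂)·log(log(1/m(x)))` for `0 < m(x) < 1/e`,
and `0` otherwise. -/
noncomputable def omega3 (x : ℝ × ℝ) : ℝ :=
  if 0 < mfun x ∧ mfun x < (Real.exp 1)⁻¹ then
    Real.sign x.1 * Real.sign x.2 * Real.log (Real.log (1 / mfun x))
  else 0

open Set

lemma mfun_eq_norm (x : ℝ × ℝ) : mfun x = ‖x‖ := by
  simp [mfun, Prod.norm_def]

lemma ae_fst_ne_zero_and_snd_ne_zero : ∀ᵐ x : ℝ × ℝ, x.1 ≠ 0 ∧ x.2 ≠ 0 :=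
  (Measure.quasiMeasurePreserving_fst.ae (Measure.ae_ne volume 0)).and
    (Measure.quasiMeasurePreserving_snd.ae (Measure.ae_ne volume 0))

lemma log_log_one_div_pos {r : ℝ} (hr : r ∈ Ioo 0 (exp 1)⁻¹) : 0 < log (log (1 / r)) := by
  refine log_pos ((lt_log_iff_exp_lt (by simpa using hr.1)).2 ?_)
  rw [one_div, lt_inv_comm₀ (exp_pos 1) hr.1]
  exact hr.2

lemma abs_omega3_of_ne_zero {x : ℝ × ℝ} (h₁ : x.1 ≠ 0) (h₂ : x.2 ≠ 0) :
    |omega3 x| = (Ioo 0 (exp 1)⁻¹).indicator (fun r => log (log (1 / r))) ‖x‖ := by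
  rw [omega3, mfun_eq_norm]
  split_ifs with hx
  · rw [indicator_of_mem (s := Ioo _ _) hx, abs_mul, abs_mul,
      abs_of_pos (log_log_one_div_pos hx)]
    rcases sign_apply_eq_of_ne_zero _ h₁ with h | h <;>
      rcases sign_apply_eq_of_ne_zero _ h₂ with h' | h' <;> simp [h, h']
  · rw [indicator_of_notMem (s := Ioo _ _) hx, abs_zero]

lemma abs_omega3_rpow_ae_eq {p : ℝ} (hp : p ≠ 0) :
    (fun x => |omega3 x| ^ p) =ᵐ[volume]
      fun x => (Ioo 0 (exp 1)⁻¹).indicator (fun r => log (log (1 / r)) ^ p) ‖x‖ := by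
  filter_upwards [ae_fst_ne_zero_and_snd_ne_zero] with x ⟨h₁, h₂⟩
  rw [abs_omega3_of_ne_zero h₁ h₂]
  by_cases hx : ‖x‖ ∈ Ioo 0 (exp 1)⁻¹
  · simp only [indicator_of_mem hx]
  · simp only [indicator_of_notMem hx, zero_rpow hp]

theorem integral_fun_norm_prod_real {F : Type*} [NormedAddCommGroup F] [NormedSpace ℝ F]
    (f : ℝ → F) :
    ∫ x : ℝ × ℝ, f ‖x‖ = (8 : ℝ) • ∫ y in Ioi (0 : ℝ), y • f y := by
  have hball : volume.real (Metric.ball (0 : ℝ × ℝ) 1) = 4 := by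
    rw [measureReal_def, ← ball_prod_same, Measure.volume_eq_prod, Measure.prod_prod,
      Real.ball_eq_Ioo, Real.volume_Ioo]
    norm_num
  rw [integral_fun_norm_addHaar volume f, hball]
  simp only [Module.finrank_prod, Module.finrank_self, Nat.reduceAdd, Nat.add_one_sub_one,
    pow_one, ← Nat.cast_smul_eq_nsmul ℝ, Nat.cast_ofNat, smul_smul]
  norm_num

theorem integral_Ioo_zero_exp_neg {E : Type*} [NormedAddCommGroup E] [NormedSpace ℝ E]
    (g : ℝ → E) (a : ℝ) :
    ∫ y in Ioo 0 (exp (-a)), g y = ∫ u in Ioi a, exp (-u) • g (exp (-u)) := by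
  have himage : (fun u => exp (-u)) '' Ioi a = Ioo 0 (exp (-a)) := by
    rw [← image_exp_Iio, ← image_neg_Ioi, image_image]
  rw [← himage, integral_image_eq_integral_abs_deriv_smul measurableSet_Ioi
    (fun u _ => (hasDerivAt_neg u).exp.hasDerivWithinAt)
    (exp_injective.comp neg_injective).injOn]
  simp [abs_of_pos (exp_pos _)]

theorem integral_abs_omega3_rpow {p : ℝ} (hp : p ≠ 0) :
    ∫ x : ℝ × ℝ, |omega3 x| ^ p = 8 * ∫ u in Ioi (1 : ℝ), exp (-2 * u) * log u ^ p := by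
  rw [integral_congr_ae (abs_omega3_rpow_ae_eq hp), integral_fun_norm_prod_real, smul_eq_mul,
    ← indicator_smul, setIntegral_indicator measurableSet_Ioo,
    inter_eq_right.2 Ioo_subset_Ioi_self, ← exp_neg, integral_Ioo_zero_exp_neg]
  refine congrArg _ (setIntegral_congr_fun measurableSet_Ioi fun u _ => ?_)
  rw [one_div, ← exp_neg, neg_neg, log_exp, smul_eq_mul, smul_eq_mul, ← mul_assoc, ← exp_add]
  ring_nf

lemma log_rpow_le_exp_mul {p u : ℝ} (hp : exp 1 ≤ p) (hu : 1 < u) :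
    log u ^ p ≤ exp u * log p ^ p := by
  have hp0 : 0 < p := (exp_pos 1).trans_le hp
  have hlp : 1 ≤ log p := (le_log_iff_exp_le hp0).2 hp
  have hlu : 0 < log u := log_pos hu
  have hloglog : log (log u) - log (log p) ≤ log u / log p - 1 := by
    rw [← log_div hlu.ne' (by linarith)]
    exact log_le_sub_one_of_pos (div_pos hlu (by linarith))
  have hlog : log u - log p ≤ u / p - 1 := by
    rw [← log_div (by linarith) hp0.ne']
    exact log_le_sub_one_of_pos (div_pos (by linarith) hp0)
  have key : p * (log (log u) - log (log p)) ≤ u := by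
    rcases le_total (log u) (log p) with hle | hge
    · have : log u / log p ≤ 1 := (div_le_one (by linarith)).2 hle
      nlinarith
    · have h₁ : log u / log p - 1 ≤ log u - log p := by
        rw [div_sub_one (by linarith)]
        exact div_le_self (by linarith) hlp
      have h₂ : p * (log u - log p) ≤ u - p :=
        calc p * (log u - log p) ≤ p * (u / p - 1) := mul_le_mul_of_nonneg_left hlog hp0.le
          _ = u - p := by field_simp
      nlinarith
  rw [rpow_def_of_pos hlu, rpow_def_of_pos (by linarith), ← exp_add, exp_le_exp]
  linarith

lemma exp_neg_two_mul_mul_log_rpow_le {p u : ℝ} (hp : exp 1 ≤ p) (hu : 1 < u) :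
    exp (-2 * u) * log u ^ p ≤ exp (-u) * log p ^ p :=
  calc exp (-2 * u) * log u ^ p ≤ exp (-2 * u) * (exp u * log p ^ p) :=
        mul_le_mul_of_nonneg_left (log_rpow_le_exp_mul hp hu) (exp_pos _).le
    _ = exp (-u) * log p ^ p := by rw [← mul_assoc, ← exp_add]; ring_nf

lemma integrableOn_exp_neg_two_mul_mul_log_rpow {p : ℝ} (hp : exp 1 ≤ p) :
    IntegrableOn (fun u => exp (-2 * u) * log u ^ p) (Ioi 1) := by
  refine ((integrableOn_exp_neg_Ioi 1).mul_const (log p ^ p)).mono' (by fun_prop) ?_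
  filter_upwards [ae_restrict_mem measurableSet_Ioi] with u hu
  rw [norm_of_nonneg (mul_nonneg (exp_pos _).le (rpow_nonneg (log_nonneg hu.le) p))]
  exact exp_neg_two_mul_mul_log_rpow_le hp hu

lemma integral_exp_neg_two_mul_mul_log_rpow_le {p : ℝ} (hp : exp 1 ≤ p) :
    ∫ u in Ioi (1 : ℝ), exp (-2 * u) * log u ^ p ≤ log p ^ p := by
  have hlp : 0 ≤ log p ^ p := rpow_nonneg (log_nonneg (one_le_exp zero_le_one |>.trans hp)) p
  calc ∫ u in Ioi (1 : ℝ), exp (-2 * u) * log u ^ p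
        ≤ ∫ u in Ioi (1 : ℝ), exp (-u) * log p ^ p :=
        setIntegral_mono_on (integrableOn_exp_neg_two_mul_mul_log_rpow hp)
          ((integrableOn_exp_neg_Ioi 1).mul_const (log p ^ p))
          measurableSet_Ioi fun u hu => exp_neg_two_mul_mul_log_rpow_le hp hu
    _ = exp (-1) * log p ^ p := by rw [integral_mul_const, integral_exp_neg_Ioi]
    _ ≤ log p ^ p := mul_le_of_le_one_left hlp (exp_le_one_iff.2 (by norm_num))

lemma le_integral_exp_neg_two_mul_mul_log_rpow {p : ℝ} (hp : exp 1 ≤ p) :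
    exp (-2 * p) / 2 * log p ^ p ≤ ∫ u in Ioi (1 : ℝ), exp (-2 * u) * log u ^ p := by
  have hp1 : 1 < p := (one_lt_exp_iff.2 one_pos).trans_le hp
  have hint := integrableOn_exp_neg_two_mul_mul_log_rpow hp
  calc exp (-2 * p) / 2 * log p ^ p = ∫ u in Ioi p, exp (-2 * u) * log p ^ p := by
        rw [integral_mul_const, integral_exp_mul_Ioi (by norm_num)]; ring
    _ ≤ ∫ u in Ioi p, exp (-2 * u) * log u ^ p := by
        refine setIntegral_mono_on ?_ (hint.mono_set (Ioi_subset_Ioi hp1.le)) measurableSet_Ioi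
          fun u hu => mul_le_mul_of_nonneg_left ?_ (exp_pos _).le
        · exact (exp_neg_integrableOn_Ioi p two_pos).mul_const _
        · exact rpow_le_rpow (log_nonneg hp1.le) (log_le_log (by linarith) (le_of_lt hu))
            (by linarith)
    _ ≤ ∫ u in Ioi (1 : ℝ), exp (-2 * u) * log u ^ p := by
        refine setIntegral_mono_set hint ?_ (Ioi_subset_Ioi hp1.le).eventuallyLE
        filter_upwards [ae_restrict_mem measurableSet_Ioi] with u hu
        exact mul_nonneg (exp_pos _).le (rpow_nonneg (log_nonneg (le_of_lt hu)) p)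

lemma exp_neg_two_mul_log_le_rpow_one_div {I p : ℝ} (hp : 3 ≤ p)
    (hlow : 4 * exp (-2 * p) * log p ^ p ≤ I) (hup : I ≤ 8 * log p ^ p) :
    exp (-2) * log p ≤ I ^ (1 / p) ∧ I ^ (1 / p) ≤ 2 * log p := by
  have hp0 : 0 < p := by linarith
  have hlog : 0 ≤ log p := log_nonneg (by linarith)
  have hpow : 0 ≤ log p ^ p := rpow_nonneg hlog p
  have hI : 0 ≤ I := le_trans (by positivity) hlow
  have h8 : (8 : ℝ) ≤ 2 ^ p :=
    calc (8 : ℝ) = 2 ^ (3 : ℝ) := by norm_num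
      _ ≤ 2 ^ p := rpow_le_rpow_of_exponent_le one_le_two hp
  rw [one_div]
  constructor
  · rw [le_rpow_inv_iff_of_pos (by positivity) hI hp0, mul_rpow (exp_pos _).le hlog, ← exp_mul]
    nlinarith [exp_pos (-2 * p)]
  · rw [rpow_inv_le_iff_of_pos hI (by positivity) hp0, mul_rpow zero_le_two hlog]
    nlinarith

theorem stmt3 :
    (∀ p : ℝ, 1 ≤ p →
      ∫ x : ℝ × ℝ, |omega3 x| ^ p =
        8 * ∫ u in Set.Ioi (1:ℝ), Real.exp (-2 * u) * Real.log u ^ p) ∧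
    (∃ p₀ : ℝ, ∀ p : ℝ, p₀ ≤ p →
      4 * Real.exp (-2 * p) * Real.log p ^ p ≤ (∫ x : ℝ × ℝ, |omega3 x| ^ p) ∧
      (∫ x : ℝ × ℝ, |omega3 x| ^ p) ≤ 8 * Real.log p ^ p) ∧
    (∃ p₁ : ℝ, ∀ p : ℝ, p₁ ≤ p →
      Real.exp (-2) * Real.log p ≤ (∫ x : ℝ × ℝ, |omega3 x| ^ p) ^ (1 / p) ∧
      (∫ x : ℝ × ℝ, |omega3 x| ^ p) ^ (1 / p) ≤ 2 * Real.log p) := by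
  have bounds : ∀ p : ℝ, 3 ≤ p →
      4 * exp (-2 * p) * log p ^ p ≤ (∫ x : ℝ × ℝ, |omega3 x| ^ p) ∧
      (∫ x : ℝ × ℝ, |omega3 x| ^ p) ≤ 8 * log p ^ p := by
    intro p hp
    have he : exp 1 ≤ p := exp_one_lt_d9.le.trans (by linarith)
    have hlow := le_integral_exp_neg_two_mul_mul_log_rpow he
    have hup := integral_exp_neg_two_mul_mul_log_rpow_le he
    rw [integral_abs_omega3_rpow (by linarith)]
    constructor <;> linarith
  exact ⟨fun p hp => integral_abs_omega3_rpow (by linarith), ⟨3, bounds⟩,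
    ⟨3, fun p hp => exp_neg_two_mul_log_le_rpow_one_div hp (bounds p hp).1 (bounds p hp).2⟩⟩
end

section
/- For every real p ≥ e^e and every real x ≥ 1, log(x·p) · log(log(x·p)) ≤ log(p) · log(log(p)) · e^{x−1}. -/
/-!
Write `y = log p ≥ e` and `u = log x ≥ 0`, so that the left-hand side is `(y + u) log (y + u)`.
From `1 + s ≤ eˢ`, each factor grows by at most an exponential factor:
`y + u ≤ y e^{u/y}` and `log (y + u) ≤ log y + u/y ≤ log y · e^{u/(y log y)}`.
Since `y ≥ e`, the exponents add up to at most `u`, and `eᵘ = x ≤ e^{x-1}`.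
-/

open Real

lemma add_le_mul_exp_div {a : ℝ} (ha : 0 < a) (s : ℝ) : a + s ≤ a * exp (s / a) :=
  calc a + s = a * (s / a + 1) := by field_simp; ring
    _ ≤ a * exp (s / a) := mul_le_mul_of_nonneg_left (add_one_le_exp _) ha.le

lemma log_add_le_log_add_div {a s : ℝ} (ha : 0 < a) (has : 0 < a + s) :
    log (a + s) ≤ log a + s / a := by
  have h := log_le_log has (add_le_mul_exp_div ha s)
  rwa [log_mul ha.ne' (exp_pos _).ne', log_exp] at h

lemma add_mul_log_add_le_mul_log_mul_exp {y u : ℝ} (hy : exp 1 ≤ y) (hu : 0 ≤ u) :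
    (y + u) * log (y + u) ≤ y * log y * exp u := by
  have hy0 : 0 < y := (exp_pos 1).trans_le hy
  have hy2 : 2 ≤ y := by linarith [add_one_le_exp 1]
  have hlog : 1 ≤ log y := (le_log_iff_exp_le hy0).mpr hy
  have hsum : y + u ≤ y * exp (u / y) := add_le_mul_exp_div hy0 u
  have hlogsum : log (y + u) ≤ log y * exp (u / y / log y) :=
    calc log (y + u) ≤ log y + u / y := log_add_le_log_add_div hy0 (by linarith)
      _ ≤ log y * exp (u / y / log y) := add_le_mul_exp_div (by linarith) _
  have hexponent : u / y + u / y / log y ≤ u := by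
    have hquot : u / y ≤ u / 2 := div_le_div_of_nonneg_left hu two_pos hy2
    have hquot' : u / y / log y ≤ u / y := div_le_self (div_nonneg hu hy0.le) hlog
    linarith
  calc (y + u) * log (y + u) ≤ y * exp (u / y) * (log y * exp (u / y / log y)) :=
        mul_le_mul hsum hlogsum (log_nonneg (by linarith)) (by positivity)
    _ = y * log y * exp (u / y + u / y / log y) := by rw [exp_add]; ring
    _ ≤ y * log y * exp u :=
        mul_le_mul_of_nonneg_left (exp_le_exp.mpr hexponent) (by positivity)

theorem stmt4 (p x : ℝ) (hp : Real.exp (Real.exp 1) ≤ p) (hx : 1 ≤ x) :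
    Real.log (x * p) * Real.log (Real.log (x * p)) ≤
      Real.log p * Real.log (Real.log p) * Real.exp (x - 1) := by
  have hp0 : 0 < p := (exp_pos _).trans_le hp
  have hlogp : exp 1 ≤ log p := (le_log_iff_exp_le hp0).mpr hp
  have hloglogp : 0 ≤ log (log p) := log_nonneg (by linarith [add_one_le_exp 1])
  calc log (x * p) * log (log (x * p)) = (log p + log x) * log (log p + log x) := by
        rw [log_mul (by positivity) hp0.ne', add_comm]
    _ ≤ log p * log (log p) * exp (log x) :=
        add_mul_log_add_le_mul_log_mul_exp hlogp (log_nonneg hx)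
    _ ≤ log p * log (log p) * exp (x - 1) :=
        mul_le_mul_of_nonneg_left (exp_le_exp.mpr (log_le_sub_one_of_pos (by positivity)))
          (mul_nonneg (by linarith [add_one_le_exp 1]) hloglogp)
end

section
/- Let μ : [0,∞) → [0,∞) be continuous with μ(0) = 0, μ(x) > 0 for all x > 0, ∫₀¹ dr/μ(r) = ∞ (the Osgood condition), and ∫₁^∞ dr/μ(r) = ∞. Then there exists a unique function Γ : [0,∞) × (0,∞) → (0,∞) satisfying ∫ₓ^{Γ(t,x)} dr/μ(r) = t for all t ≥ 0 and x > 0. Moreover: Γ(0,x) = x for all x > 0; Γ(t,x) > x for all t > 0 and x > 0; for each fixed t ≥ 0 the map x ↦ Γ(t,x) is strictly increasing; for each fixed x > 0 the map t ↦ Γ(t,x) is strictly increasing; and for each fixed t ≥ 0, Γ(t,x) → 0 as x → 0⁺. -/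
/-!
Put `F x = ∫₁ˣ dr/μ(r)`, so that the defining equation reads `F (Γ t x) = F x + t`. As `1/μ` is
positive and continuous on `(0, ∞)`, `F` is continuous and strictly increasing there; the
divergence at `∞` makes it unbounded above and the Osgood condition makes it unbounded below.
Hence `F` maps `(0, ∞)` bijectively onto `ℝ`, and `Γ t = F⁻¹ ∘ (· + t) ∘ F` inherits every
claimed property from the translation `· + t`; in particular `Γ t x → 0` as `x → 0⁺` because
`F → -∞` there.
-/

open MeasureTheory Filter Set Topology Function

theorem IsPreconnected.surjOn_univ_of_not_bddAbove_of_not_bddBelow {X : Type*}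
    [TopologicalSpace X] {s : Set X} (hs : IsPreconnected s) {F : X → ℝ}
    (hF : ContinuousOn F s) (htop : ¬BddAbove (F '' s)) (hbot : ¬BddBelow (F '' s)) :
    SurjOn F s univ := by
  intro y _
  obtain ⟨_, ⟨a, ha, rfl⟩, hay⟩ := not_bddBelow_iff.1 hbot y
  obtain ⟨_, ⟨b, hb, rfl⟩, hyb⟩ := not_bddAbove_iff.1 htop y
  exact hs.intermediate_value ha hb hF ⟨hay.le, hyb.le⟩

section ConjTranslate

variable {F : ℝ → ℝ}

noncomputable def conjTranslate (F : ℝ → ℝ) (t x : ℝ) : ℝ :=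
  invFunOn F (Ioi 0) (F x + t)

variable (hsurj : SurjOn F (Ioi 0) univ)
include hsurj

theorem conjTranslate_pos (t x : ℝ) : 0 < conjTranslate F t x :=
  invFunOn_mem (hsurj (mem_univ _))

theorem apply_conjTranslate (t x : ℝ) : F (conjTranslate F t x) = F x + t :=
  invFunOn_eq (hsurj (mem_univ _))

variable (hF : StrictMonoOn F (Ioi 0))
include hF

theorem conjTranslate_lt_iff {t x y : ℝ} (hy : 0 < y) :
    conjTranslate F t x < y ↔ F x + t < F y := by
  rw [← apply_conjTranslate hsurj t x]
  exact (hF.lt_iff_lt (conjTranslate_pos hsurj t x) hy).symm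

theorem lt_conjTranslate_iff {t x y : ℝ} (hy : 0 < y) :
    y < conjTranslate F t x ↔ F y < F x + t := by
  rw [← apply_conjTranslate hsurj t x]
  exact (hF.lt_iff_lt hy (conjTranslate_pos hsurj t x)).symm

theorem eq_conjTranslate {t x y : ℝ} (hy : 0 < y) (h : F y = F x + t) :
    y = conjTranslate F t x :=
  hF.injOn hy (conjTranslate_pos hsurj t x) (h.trans (apply_conjTranslate hsurj t x).symm)

theorem conjTranslate_zero {x : ℝ} (hx : 0 < x) : conjTranslate F 0 x = x :=
  (eq_conjTranslate hsurj hF hx (add_zero _).symm).symm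

theorem lt_conjTranslate {t x : ℝ} (ht : 0 < t) (hx : 0 < x) : x < conjTranslate F t x :=
  (lt_conjTranslate_iff hsurj hF hx).2 (lt_add_of_pos_right _ ht)

theorem strictMonoOn_conjTranslate (t : ℝ) : StrictMonoOn (conjTranslate F t) (Ioi 0) :=
  fun x hx y hy hxy => (conjTranslate_lt_iff hsurj hF (conjTranslate_pos hsurj t y)).2 <| by
    rw [apply_conjTranslate hsurj]
    linarith [hF hx hy hxy]

theorem strictMono_conjTranslate_left (x : ℝ) : StrictMono fun t => conjTranslate F t x :=
  fun s t hst => (conjTranslate_lt_iff hsurj hF (conjTranslate_pos hsurj t x)).2 <| by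
    rw [apply_conjTranslate hsurj]
    linarith

theorem tendsto_conjTranslate_nhdsGT_zero (hbot : ¬BddBelow (F '' Ioi 0)) (t : ℝ) :
    Tendsto (conjTranslate F t) (𝓝[>] 0) (𝓝 0) := by
  refine tendsto_order.2 ⟨fun a ha => .of_forall fun x => ha.trans (conjTranslate_pos hsurj t x),
    fun ε hε => ?_⟩
  obtain ⟨_, ⟨δ, hδ, rfl⟩, hδε⟩ := not_bddBelow_iff.1 hbot (F ε - t)
  filter_upwards [Ioo_mem_nhdsGT hδ] with x hx
  exact (conjTranslate_lt_iff hsurj hF hε).2 (by linarith [hF hx.1 hδ hx.2])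

end ConjTranslate

section Primitive

variable {f : ℝ → ℝ}

theorem integral_norm_eq_integral_of_nonneg_on_Ioi (hf0 : ∀ x ∈ Ioi 0, 0 ≤ f x) {a b : ℝ}
    (ha : 0 < a) (hb : 0 < b) : ∫ r in a..b, ‖f r‖ = ∫ r in a..b, f r :=
  intervalIntegral.integral_congr fun x hx =>
    Real.norm_of_nonneg (hf0 x (ordConnected_Ioi.uIcc_subset ha hb hx))

variable (hf : ContinuousOn f (Ioi 0))
include hf

theorem integrableOn_Ioc_of_continuousOn_Ioi {a b : ℝ} (ha : 0 < a) :
    IntegrableOn f (Ioc a b) :=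
  (hf.mono fun _ hx => ha.trans_le hx.1).integrableOn_Icc.mono_set Ioc_subset_Icc_self

theorem intervalIntegrable_of_continuousOn_Ioi {a b : ℝ} (ha : 0 < a) (hb : 0 < b) :
    IntervalIntegrable f volume a b :=
  (hf.mono (ordConnected_Ioi.uIcc_subset ha hb)).intervalIntegrable

theorem integral_eq_sub_integral_one {a b : ℝ} (ha : 0 < a) (hb : 0 < b) :
    ∫ r in a..b, f r = (∫ r in (1 : ℝ)..b, f r) - ∫ r in (1 : ℝ)..a, f r :=
  (intervalIntegral.integral_interval_sub_left
    (intervalIntegrable_of_continuousOn_Ioi hf one_pos hb)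
    (intervalIntegrable_of_continuousOn_Ioi hf one_pos ha)).symm

theorem continuousOn_integral_one : ContinuousOn (fun x => ∫ r in (1 : ℝ)..x, f r) (Ioi 0) :=
  fun x hx => (intervalIntegral.integral_hasDerivAt_right
    (intervalIntegrable_of_continuousOn_Ioi hf one_pos hx)
    (hf.stronglyMeasurableAtFilter isOpen_Ioi x hx)
    (hf.continuousAt (isOpen_Ioi.mem_nhds hx))).continuousAt.continuousWithinAt

theorem strictMonoOn_integral_one (hfpos : ∀ x ∈ Ioi 0, 0 < f x) :
    StrictMonoOn (fun x => ∫ r in (1 : ℝ)..x, f r) (Ioi 0) := fun a ha b hb hab => by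
  have := intervalIntegral.intervalIntegral_pos_of_pos_on
    (intervalIntegrable_of_continuousOn_Ioi hf ha hb)
    (fun x hx => hfpos x (lt_trans ha hx.1)) hab
  rw [integral_eq_sub_integral_one hf ha hb] at this
  simpa using this

variable (hf0 : ∀ x ∈ Ioi 0, 0 ≤ f x)
include hf0

theorem not_bddAbove_integral_one
    (htop : ∫⁻ r in Ioi (1 : ℝ), ENNReal.ofReal (f r) = ⊤) :
    ¬BddAbove ((fun x => ∫ r in (1 : ℝ)..x, f r) '' Ioi 0) := by
  rintro ⟨M, hM⟩
  have hint : IntegrableOn f (Ioi 1) := by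
    refine integrableOn_Ioi_of_intervalIntegral_norm_bounded M 1
      (fun b => integrableOn_Ioc_of_continuousOn_Ioi hf one_pos) tendsto_id ?_
    filter_upwards [eventually_gt_atTop 0] with b hb
    rw [id, integral_norm_eq_integral_of_nonneg_on_Ioi hf0 one_pos hb]
    exact hM (mem_image_of_mem _ hb)
  exact hint.setLIntegral_lt_top.ne htop

theorem not_bddBelow_integral_one
    (hbot : ∫⁻ r in Ioo (0 : ℝ) 1, ENNReal.ofReal (f r) = ⊤) :
    ¬BddBelow ((fun x => ∫ r in (1 : ℝ)..x, f r) '' Ioi 0) := by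
  rintro ⟨m, hm⟩
  have hpos (n : ℕ) : (0 : ℝ) < 1 / (n + 1) := by positivity
  have hint : IntegrableOn f (Ioc 0 1) := by
    refine integrableOn_Ioc_of_intervalIntegral_norm_bounded_left (I := -m)
      (fun n => integrableOn_Ioc_of_continuousOn_Ioi hf (hpos n))
      tendsto_one_div_add_atTop_nhds_zero_nat (.of_forall fun n => ?_)
    rw [← intervalIntegral.integral_of_le (div_le_one_of_le₀ (by simp) (by positivity)),
      integral_norm_eq_integral_of_nonneg_on_Ioi hf0 (hpos n) one_pos,
      integral_eq_sub_integral_one hf (hpos n) one_pos, intervalIntegral.integral_same]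
    linarith [hm (mem_image_of_mem _ (hpos n))]
  exact (hint.mono_set Ioo_subset_Ioc_self).setLIntegral_lt_top.ne hbot

end Primitive

theorem stmt5_general (μ : ℝ → ℝ) (hcont : ContinuousOn μ (Set.Ici 0))
    (hpos : ∀ x > 0, 0 < μ x)
    (hOsgood : ∫⁻ r in Set.Ioo (0:ℝ) 1, ENNReal.ofReal (μ r)⁻¹ = ⊤)
    (hInfty : ∫⁻ r in Set.Ioi (1:ℝ), ENNReal.ofReal (μ r)⁻¹ = ⊤) :
    ∃ Γ : ℝ → ℝ → ℝ,
      (∀ t ≥ 0, ∀ x > 0, 0 < Γ t x ∧ ∫ r in x..Γ t x, (μ r)⁻¹ = t) ∧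
      (∀ Γ' : ℝ → ℝ → ℝ,
        (∀ t ≥ 0, ∀ x > 0, 0 < Γ' t x ∧ ∫ r in x..Γ' t x, (μ r)⁻¹ = t) →
        ∀ t ≥ 0, ∀ x > 0, Γ' t x = Γ t x) ∧
      (∀ x > 0, Γ 0 x = x) ∧
      (∀ t > 0, ∀ x > 0, x < Γ t x) ∧
      (∀ t ≥ 0, StrictMonoOn (Γ t) (Set.Ioi 0)) ∧
      (∀ x > 0, StrictMonoOn (fun t => Γ t x) (Set.Ici 0)) ∧
      (∀ t ≥ 0, Tendsto (Γ t) (nhdsWithin 0 (Set.Ioi 0)) (nhds 0)) := by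
  have hf : ContinuousOn (fun r => (μ r)⁻¹) (Ioi 0) :=
    (hcont.mono Ioi_subset_Ici_self).inv₀ fun x hx => (hpos x hx).ne'
  have hfpos : ∀ x ∈ Ioi 0, 0 < (μ x)⁻¹ := fun x hx => inv_pos.2 (hpos x hx)
  have hf0 : ∀ x ∈ Ioi 0, 0 ≤ (μ x)⁻¹ := fun x hx => (hfpos x hx).le
  set F := fun x => ∫ r in (1 : ℝ)..x, (μ r)⁻¹
  have hF : StrictMonoOn F (Ioi 0) := strictMonoOn_integral_one hf hfpos
  have hbot : ¬BddBelow (F '' Ioi 0) := not_bddBelow_integral_one hf hf0 hOsgood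
  have hsurj : SurjOn F (Ioi 0) univ :=
    isPreconnected_Ioi.surjOn_univ_of_not_bddAbove_of_not_bddBelow
      (continuousOn_integral_one hf) (not_bddAbove_integral_one hf hf0 hInfty) hbot
  have hint {x y : ℝ} (hx : 0 < x) (hy : 0 < y) : ∫ r in x..y, (μ r)⁻¹ = F y - F x :=
    integral_eq_sub_integral_one hf hx hy
  refine ⟨conjTranslate F, fun t _ x hx => ⟨conjTranslate_pos hsurj t x, ?_⟩, ?_,
    fun x hx => conjTranslate_zero hsurj hF hx, fun t ht x hx => lt_conjTranslate hsurj hF ht hx,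
    fun t _ => strictMonoOn_conjTranslate hsurj hF t,
    fun x _ => (strictMono_conjTranslate_left hsurj hF x).strictMonoOn _,
    fun t _ => tendsto_conjTranslate_nhdsGT_zero hsurj hF hbot t⟩
  · rw [hint hx (conjTranslate_pos hsurj t x), apply_conjTranslate hsurj]
    ring
  · intro Γ' hΓ' t ht x hx
    obtain ⟨hΓ'pos, hΓ'int⟩ := hΓ' t ht x hx
    exact eq_conjTranslate hsurj hF hΓ'pos (by linarith [hint hx hΓ'pos])

theorem stmt5 (μ : ℝ → ℝ) (hcont : ContinuousOn μ (Set.Ici 0)) (h0 : μ 0 = 0)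
    (hpos : ∀ x > 0, 0 < μ x)
    (hOsgood : ∫⁻ r in Set.Ioo (0:ℝ) 1, ENNReal.ofReal (μ r)⁻¹ = ⊤)
    (hInfty : ∫⁻ r in Set.Ioi (1:ℝ), ENNReal.ofReal (μ r)⁻¹ = ⊤) :
    ∃ Γ : ℝ → ℝ → ℝ,
      (∀ t ≥ 0, ∀ x > 0, 0 < Γ t x ∧ ∫ r in x..Γ t x, (μ r)⁻¹ = t) ∧
      (∀ Γ' : ℝ → ℝ → ℝ,
        (∀ t ≥ 0, ∀ x > 0, 0 < Γ' t x ∧ ∫ r in x..Γ' t x, (μ r)⁻¹ = t) →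
        ∀ t ≥ 0, ∀ x > 0, Γ' t x = Γ t x) ∧
      (∀ x > 0, Γ 0 x = x) ∧
      (∀ t > 0, ∀ x > 0, x < Γ t x) ∧
      (∀ t ≥ 0, StrictMonoOn (Γ t) (Set.Ioi 0)) ∧
      (∀ x > 0, StrictMonoOn (fun t => Γ t x) (Set.Ici 0)) ∧
      (∀ t ≥ 0, Tendsto (Γ t) (nhdsWithin 0 (Set.Ioi 0)) (nhds 0)) :=
  stmt5_general μ hcont hpos hOsgood hInfty
end

section
/- Let μ : [0,∞) → [0,∞) be continuous with μ(0) = 0, μ > 0 on (0,∞), ∫₀¹ dr/μ(r) = ∞ and ∫₁^∞ dr/μ(r) = ∞, and assume μ is differentiable on (0,∞). Let Γ be the associated flow defined by ∫ₓ^{Γ(t,x)} dr/μ(r) = t, and let 0 < a ≤ ∞. Then the following are equivalent: (1) μ is concave on (0,a) (i.e. μ' is nonincreasing on (0,a)); (2) for every t > 0, x ↦ Γ(t,x) is twice differentiable on (0,∞) and ∂ₓ²Γ(t,x) ≤ 0 for every x > 0 with Γ(t,x) < a; (3) there exists δ > 0 such that the conclusion of (2) holds for every t ∈ (0,δ). Moreover,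 in this situation ∂ₓ²Γ(t,x) = (μ'(Γ(t,x)) − μ'(x))·∂ₓΓ(t,x)/μ(x), and if ∂ₓ²Γ(t,x) < 0 for every t > 0 and every x with Γ(t,x) < a, then μ' is strictly decreasing on (0,a). -/
open MeasureTheory Real Filter
open scoped ENNReal

/-!
With `F` a primitive of `1/μ` on `(0, ∞)`, the relation defining `Γ` reads
`F (Γ t x) = F x + t`. Hence `t ↦ Γ t x` solves `∂ₜΓ = μ(Γ)`, `Γ t` is a time orbit reparametrised
by `F`, and `∂ₓΓ t x = μ(Γ t x) / μ x`; differentiating once more gives the formula for `∂ₓ²Γ`.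
Since `∂ₓΓ > 0` and `x < Γ t x`, the sign of `∂ₓ²Γ t x` is that of `μ'(Γ t x) - μ'(x)`, and any
`x < y` are joined by the flow, `y = Γ (F y - F x) x`. For small times this suffices because
of the semigroup law `Γ t ∘ Γ s = Γ (s + t)`.
-/

open Set Topology

lemma sub_mul_div_nonpos_iff {b c p q : ℝ} (hp : 0 < p) (hq : 0 < q) :
    (b - c) * p / q ≤ 0 ↔ b ≤ c := by
  have := div_pos hp hq
  rw [mul_div_assoc]
  constructor <;> intro h <;> nlinarith

lemma sub_mul_div_neg_iff {b c p q : ℝ} (hp : 0 < p) (hq : 0 < q) :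
    (b - c) * p / q < 0 ↔ b < c := by
  have := div_pos hp hq
  rw [mul_div_assoc]
  constructor <;> intro h <;> nlinarith

lemma forall_nonneg_of_add_of_Ico {P : ℝ → Prop} {δ : ℝ} (hδ : 0 < δ)
    (hsmall : ∀ t ∈ Ico 0 δ, P t) (hadd : ∀ s t, 0 ≤ s → 0 ≤ t → P s → P t → P (s + t))
    {t : ℝ} (ht : 0 ≤ t) : P t := by
  obtain ⟨n, hn⟩ := exists_nat_gt (t / δ)
  have hn₀ : (0 : ℝ) < n := lt_of_le_of_lt (by positivity) hn
  set s := t / n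
  have hs : s ∈ Ico 0 δ := ⟨by positivity, by rwa [div_lt_iff₀ hn₀, mul_comm, ← div_lt_iff₀ hδ]⟩
  have hmul : ∀ k : ℕ, P (k * s) := by
    intro k
    induction k with
    | zero => simpa using hsmall 0 ⟨le_rfl, hδ⟩
    | succ k ih =>
      rw [Nat.cast_succ, add_one_mul]
      exact hadd _ _ (by positivity) hs.1 ih (hsmall s hs)
  simpa [s, mul_div_cancel₀ t hn₀.ne'] using hmul n

section Flow

variable {μ F : ℝ → ℝ} {Γ : ℝ → ℝ → ℝ}

lemma intervalIntegrable_inv_of_pos (hμ : ContinuousOn μ (Ioi 0)) (hpos : ∀ x > 0, 0 < μ x)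
    {x y : ℝ} (hx : 0 < x) (hy : 0 < y) : IntervalIntegrable (fun r => (μ r)⁻¹) volume x y := by
  refine ((hμ.inv₀ fun r hr => (hpos r hr).ne').mono fun r hr => ?_).intervalIntegrable
  exact lt_of_lt_of_le (lt_min hx hy) hr.1

lemma hasDerivAt_integral_inv (hμ : ContinuousOn μ (Ioi 0)) (hpos : ∀ x > 0, 0 < μ x)
    {c x : ℝ} (hc : 0 < c) (hx : 0 < x) :
    HasDerivAt (fun y => ∫ r in c..y, (μ r)⁻¹) (μ x)⁻¹ x :=
  intervalIntegral.integral_hasDerivAt_right (intervalIntegrable_inv_of_pos hμ hpos hc hx)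
    ((hμ.inv₀ fun r hr => (hpos r hr).ne').stronglyMeasurableAtFilter isOpen_Ioi x hx)
    ((hμ.continuousAt (Ioi_mem_nhds hx)).inv₀ (hpos x hx).ne')

lemma strictMonoOn_of_hasDerivAt_inv (hpos : ∀ x > 0, 0 < μ x)
    (hF : ∀ x > 0, HasDerivAt F (μ x)⁻¹ x) : StrictMonoOn F (Ioi 0) :=
  strictMonoOn_of_hasDerivWithinAt_pos (convex_Ioi 0)
    (fun x hx => (hF x hx).continuousAt.continuousWithinAt)
    (fun x hx => (hF x (interior_subset hx)).hasDerivWithinAt)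
    (fun x hx => inv_pos.mpr (hpos x (interior_subset hx)))

/-- `F` serves as a clock on `(0, ∞)`: when `F' = 1/μ`, `Γ` is the flow of `x' = μ(x)`. -/
def IsFlow (F : ℝ → ℝ) (Γ : ℝ → ℝ → ℝ) : Prop :=
  ∀ t ≥ 0, ∀ x > 0, 0 < Γ t x ∧ F (Γ t x) = F x + t

lemma isFlow_integral_inv (hμ : ContinuousOn μ (Ioi 0)) (hpos : ∀ x > 0, 0 < μ x)
    (hΓ : ∀ t ≥ 0, ∀ x > 0, 0 < Γ t x ∧ ∫ r in x..Γ t x, (μ r)⁻¹ = t) :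
    IsFlow (fun y => ∫ r in (1 : ℝ)..y, (μ r)⁻¹) Γ := by
  intro t ht x hx
  obtain ⟨hΓpos, hΓint⟩ := hΓ t ht x hx
  have hsplit := intervalIntegral.integral_interval_sub_left
    (intervalIntegrable_inv_of_pos hμ hpos one_pos hΓpos)
    (intervalIntegrable_inv_of_pos hμ hpos one_pos hx)
  exact ⟨hΓpos, by linarith⟩

namespace IsFlow

variable {s t x y : ℝ}

lemma eq_of_apply_eq (hF : StrictMonoOn F (Ioi 0)) (hΓ : IsFlow F Γ) (ht : 0 ≤ t) (hx : 0 < x)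
    (hy : 0 < y) (h : F y = F x + t) : Γ t x = y :=
  hF.injOn (hΓ t ht x hx).1 hy ((hΓ t ht x hx).2.trans h.symm)

lemma apply_zero (hF : StrictMonoOn F (Ioi 0)) (hΓ : IsFlow F Γ) (hx : 0 < x) : Γ 0 x = x :=
  hΓ.eq_of_apply_eq hF le_rfl hx hx (add_zero _).symm

lemma apply_sub (hF : StrictMonoOn F (Ioi 0)) (hΓ : IsFlow F Γ) (hx : 0 < x) (hxy : x ≤ y) :
    Γ (F y - F x) x = y :=
  hΓ.eq_of_apply_eq hF (sub_nonneg.mpr (hF.monotoneOn hx (hx.trans_le hxy) hxy)) hx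
    (hx.trans_le hxy) (by ring)

lemma apply_apply (hF : StrictMonoOn F (Ioi 0)) (hΓ : IsFlow F Γ) (hs : 0 ≤ s) (ht : 0 ≤ t)
    (hx : 0 < x) : Γ t (Γ s x) = Γ (s + t) x := by
  obtain ⟨hΓs, hFs⟩ := hΓ s hs x hx
  obtain ⟨hΓst, hFst⟩ := hΓ (s + t) (add_nonneg hs ht) x hx
  exact hΓ.eq_of_apply_eq hF ht hΓs hΓst (by rw [hFst, hFs, add_assoc])

lemma strictMonoOn_time (hF : StrictMonoOn F (Ioi 0)) (hΓ : IsFlow F Γ) (hx : 0 < x) :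
    StrictMonoOn (fun t => Γ t x) (Ici 0) := by
  intro s hs t ht hst
  obtain ⟨hΓs, hFs⟩ := hΓ s hs x hx
  obtain ⟨hΓt, hFt⟩ := hΓ t ht x hx
  exact (hF.lt_iff_lt hΓs hΓt).mp (by simp only [hFs, hFt, add_lt_add_iff_left, hst])

lemma le_apply (hF : StrictMonoOn F (Ioi 0)) (hΓ : IsFlow F Γ) (ht : 0 ≤ t) (hx : 0 < x) :
    x ≤ Γ t x := by
  simpa only [hΓ.apply_zero hF hx] using (hΓ.strictMonoOn_time hF hx).monotoneOn self_mem_Ici ht ht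

lemma lt_apply (hF : StrictMonoOn F (Ioi 0)) (hΓ : IsFlow F Γ) (ht : 0 < t) (hx : 0 < x) :
    x < Γ t x := by
  simpa only [hΓ.apply_zero hF hx] using (hΓ.strictMonoOn_time hF hx) self_mem_Ici ht.le ht

lemma continuousAt_time (hF : StrictMonoOn F (Ioi 0)) (hΓ : IsFlow F Γ) (ht : 0 < t)
    (hx : 0 < x) : ContinuousAt (fun s => Γ s x) t := by
  refine ((hΓ.strictMonoOn_time hF hx).mono Ioi_subset_Ici_self).continuousAt_of_image_mem_nhds
    (Ioi_mem_nhds ht) (mem_of_superset (Ioi_mem_nhds (hΓ.lt_apply hF ht hx)) fun y hy => ?_)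
  exact ⟨F y - F x, sub_pos.mpr (hF hx (hx.trans hy) hy), hΓ.apply_sub hF hx (le_of_lt hy)⟩

lemma hasDerivAt_time (hpos : ∀ x > 0, 0 < μ x) (hF : ∀ x > 0, HasDerivAt F (μ x)⁻¹ x)
    (hΓ : IsFlow F Γ) (ht : 0 < t) (hx : 0 < x) : HasDerivAt (fun s => Γ s x) (μ (Γ t x)) t := by
  have hFmono := strictMonoOn_of_hasDerivAt_inv hpos hF
  have hΓt := (hΓ t ht.le x hx).1
  simpa only [inv_inv] using HasDerivAt.of_local_left_inverse (f := fun y => F y - F x)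
    (hΓ.continuousAt_time hFmono ht hx) ((hF _ hΓt).sub_const _) (inv_pos.mpr (hpos _ hΓt)).ne'
    (eventually_of_mem (Ioi_mem_nhds ht) fun s hs => by simp [(hΓ s (le_of_lt hs) x hx).2])

lemma hasDerivAt (hpos : ∀ x > 0, 0 < μ x) (hF : ∀ x > 0, HasDerivAt F (μ x)⁻¹ x)
    (hΓ : IsFlow F Γ) (ht : 0 < t) (hx : 0 < x) : HasDerivAt (Γ t) (μ (Γ t x) / μ x) x := by
  have hFmono := strictMonoOn_of_hasDerivAt_inv hpos hF
  have hshift : Γ t =ᶠ[𝓝 x] (fun s => Γ s x) ∘ (fun y => F y - F x + t) := by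
    have hnear : ∀ᶠ y in 𝓝 x, F x - t < F y :=
      (hF x hx).continuousAt.eventually (Ioi_mem_nhds (sub_lt_self _ ht))
    filter_upwards [hnear, Ioi_mem_nhds hx] with y hy hy₀
    have hs : 0 ≤ F y - F x + t := by linarith
    exact hΓ.eq_of_apply_eq hFmono ht.le hy₀ (hΓ _ hs x hx).1
      (by simp only [Function.comp_apply, (hΓ _ hs x hx).2]; ring)
  have hcomp := (hΓ.hasDerivAt_time hpos hF ht hx).comp_of_eq x
    (((hF x hx).sub_const (F x)).add_const t) (by ring)
  rw [← div_eq_mul_inv] at hcomp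
  exact hcomp.congr_of_eventuallyEq hshift

lemma hasDerivAt_deriv (hpos : ∀ x > 0, 0 < μ x) (hdiff : ∀ x > 0, DifferentiableAt ℝ μ x)
    (hF : ∀ x > 0, HasDerivAt F (μ x)⁻¹ x) (hΓ : IsFlow F Γ) (ht : 0 < t) (hx : 0 < x) :
    HasDerivAt (deriv (Γ t))
      ((deriv μ (Γ t x) - deriv μ x) * (μ (Γ t x) / μ x) / μ x) x := by
  have hΓt := (hΓ t ht.le x hx).1
  have hderiv : deriv (Γ t) =ᶠ[𝓝 x] fun y => μ (Γ t y) / μ y :=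
    eventually_of_mem (Ioi_mem_nhds hx) fun y hy => (hΓ.hasDerivAt hpos hF ht hy).deriv
  have hquot := ((hdiff _ hΓt).hasDerivAt.comp x (hΓ.hasDerivAt hpos hF ht hx)).div
    (hdiff x hx).hasDerivAt (hpos x hx).ne'
  refine (hquot.congr_of_eventuallyEq hderiv).congr_deriv ?_
  have := hpos x hx
  field_simp
  simp only [Function.comp_apply]
  ring

lemma deriv_deriv_nonpos_iff (hpos : ∀ x > 0, 0 < μ x) (hdiff : ∀ x > 0, DifferentiableAt ℝ μ x)
    (hF : ∀ x > 0, HasDerivAt F (μ x)⁻¹ x) (hΓ : IsFlow F Γ) (ht : 0 < t) (hx : 0 < x) :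
    deriv (deriv (Γ t)) x ≤ 0 ↔ deriv μ (Γ t x) ≤ deriv μ x := by
  rw [(hΓ.hasDerivAt_deriv hpos hdiff hF ht hx).deriv]
  exact sub_mul_div_nonpos_iff (div_pos (hpos _ (hΓ t ht.le x hx).1) (hpos x hx)) (hpos x hx)

lemma deriv_deriv_neg_iff (hpos : ∀ x > 0, 0 < μ x) (hdiff : ∀ x > 0, DifferentiableAt ℝ μ x)
    (hF : ∀ x > 0, HasDerivAt F (μ x)⁻¹ x) (hΓ : IsFlow F Γ) (ht : 0 < t) (hx : 0 < x) :
    deriv (deriv (Γ t)) x < 0 ↔ deriv μ (Γ t x) < deriv μ x := by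
  rw [(hΓ.hasDerivAt_deriv hpos hdiff hF ht hx).deriv]
  exact sub_mul_div_neg_iff (div_pos (hpos _ (hΓ t ht.le x hx).1) (hpos x hx)) (hpos x hx)

lemma apply_le_of_antitoneOn (hF : StrictMonoOn F (Ioi 0)) (hΓ : IsFlow F Γ) {g : ℝ → ℝ}
    {a : ℝ≥0∞} (hg : AntitoneOn g {x | 0 < x ∧ ENNReal.ofReal x < a}) (ht : 0 ≤ t) (hx : 0 < x)
    (ha : ENNReal.ofReal (Γ t x) < a) : g (Γ t x) ≤ g x :=
  hg ⟨hx, (ENNReal.ofReal_le_ofReal (hΓ.le_apply hF ht hx)).trans_lt ha⟩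
    ⟨(hΓ t ht x hx).1, ha⟩ (hΓ.le_apply hF ht hx)

lemma antitoneOn_of_apply_le (hF : StrictMonoOn F (Ioi 0)) (hΓ : IsFlow F Γ) {g : ℝ → ℝ}
    {a : ℝ≥0∞} {δ : ℝ} (hδ : 0 < δ)
    (h : ∀ t ∈ Ioo 0 δ, ∀ x > 0, ENNReal.ofReal (Γ t x) < a → g (Γ t x) ≤ g x) :
    AntitoneOn g {x | 0 < x ∧ ENNReal.ofReal x < a} := by
  have hall : ∀ t ≥ 0, ∀ x > 0, ENNReal.ofReal (Γ t x) < a → g (Γ t x) ≤ g x := by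
    refine fun t ht => forall_nonneg_of_add_of_Ico (P := fun t => ∀ x > 0,
      ENNReal.ofReal (Γ t x) < a → g (Γ t x) ≤ g x) hδ (fun t ht => ?_) ?_ ht
    · rcases ht.1.eq_or_lt with rfl | ht₀
      · intro x hx _
        rw [hΓ.apply_zero hF hx]
      · exact h t ⟨ht₀, ht.2⟩
    · intro s t hs ht hPs hPt x hx ha
      have hΓs := (hΓ s hs x hx).1
      rw [← hΓ.apply_apply hF hs ht hx] at ha ⊢
      have has : ENNReal.ofReal (Γ s x) < a :=
        (ENNReal.ofReal_le_ofReal (hΓ.le_apply hF ht hΓs)).trans_lt ha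
      exact (hPt _ hΓs ha).trans (hPs x hx has)
  intro x hx y hy hxy
  simpa only [hΓ.apply_sub hF hx.1 hxy] using
    hall _ (sub_nonneg.mpr (hF.monotoneOn hx.1 hy.1 hxy)) x hx.1
      (by rw [hΓ.apply_sub hF hx.1 hxy]; exact hy.2)

lemma strictAntiOn_of_apply_lt (hF : StrictMonoOn F (Ioi 0)) (hΓ : IsFlow F Γ) {g : ℝ → ℝ}
    {a : ℝ≥0∞} (h : ∀ t > 0, ∀ x > 0, ENNReal.ofReal (Γ t x) < a → g (Γ t x) < g x) :
    StrictAntiOn g {x | 0 < x ∧ ENNReal.ofReal x < a} := by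
  intro x hx y hy hxy
  have hGy := hΓ.apply_sub hF hx.1 hxy.le
  simpa only [hGy] using h _ (sub_pos.mpr (hF hx.1 hy.1 hxy)) x hx.1 (by rw [hGy]; exact hy.2)

end IsFlow

end Flow

theorem stmt7_general (μ : ℝ → ℝ)
    (hpos : ∀ x > 0, 0 < μ x)
    (hdiff : ∀ x > 0, DifferentiableAt ℝ μ x)
    (Γ : ℝ → ℝ → ℝ)
    (hΓ : ∀ t ≥ 0, ∀ x > 0, 0 < Γ t x ∧ ∫ r in x..Γ t x, (μ r)⁻¹ = t)
    (a : ℝ≥0∞) :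
    (AntitoneOn (deriv μ) {x : ℝ | 0 < x ∧ ENNReal.ofReal x < a} ↔
      (∀ t > 0,
        (∀ x > 0, DifferentiableAt ℝ (fun y => Γ t y) x ∧
          DifferentiableAt ℝ (deriv (fun y => Γ t y)) x) ∧
        (∀ x > 0, ENNReal.ofReal (Γ t x) < a →
          deriv (deriv (fun y => Γ t y)) x ≤ 0))) ∧
    ((∀ t > 0,
        (∀ x > 0, DifferentiableAt ℝ (fun y => Γ t y) x ∧
          DifferentiableAt ℝ (deriv (fun y => Γ t y)) x) ∧
        (∀ x > 0, ENNReal.ofReal (Γ t x) < a →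
          deriv (deriv (fun y => Γ t y)) x ≤ 0)) ↔
      (∃ δ > 0, ∀ t ∈ Set.Ioo (0:ℝ) δ,
        (∀ x > 0, DifferentiableAt ℝ (fun y => Γ t y) x ∧
          DifferentiableAt ℝ (deriv (fun y => Γ t y)) x) ∧
        (∀ x > 0, ENNReal.ofReal (Γ t x) < a →
          deriv (deriv (fun y => Γ t y)) x ≤ 0))) ∧
    (∀ t > 0, ∀ x > 0,
      deriv (deriv (fun y => Γ t y)) x =
        (deriv μ (Γ t x) - deriv μ x) * deriv (fun y => Γ t y) x / μ x) ∧
    ((∀ t > 0, ∀ x > 0, ENNReal.ofReal (Γ t x) < a →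
        deriv (deriv (fun y => Γ t y)) x < 0) →
      StrictAntiOn (deriv μ) {x : ℝ | 0 < x ∧ ENNReal.ofReal x < a}) := by
  have hμ : ContinuousOn μ (Ioi 0) := fun x hx => (hdiff x hx).continuousAt.continuousWithinAt
  set F : ℝ → ℝ := fun y => ∫ r in (1 : ℝ)..y, (μ r)⁻¹
  have hF : ∀ x > 0, HasDerivAt F (μ x)⁻¹ x := fun x hx =>
    hasDerivAt_integral_inv hμ hpos one_pos hx
  have hFmono := strictMonoOn_of_hasDerivAt_inv hpos hF
  have hflow : IsFlow F Γ := isFlow_integral_inv hμ hpos hΓ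
  have hΓ' := fun t (ht : 0 < t) x (hx : 0 < x) => hflow.hasDerivAt hpos hF ht hx
  have hΓ'' := fun t (ht : 0 < t) x (hx : 0 < x) => hflow.hasDerivAt_deriv hpos hdiff hF ht hx
  have hconcave : ∀ t > 0,
      ((∀ x > 0, DifferentiableAt ℝ (fun y => Γ t y) x ∧
          DifferentiableAt ℝ (deriv (fun y => Γ t y)) x) ∧
        (∀ x > 0, ENNReal.ofReal (Γ t x) < a → deriv (deriv (fun y => Γ t y)) x ≤ 0)) ↔
      ∀ x > 0, ENNReal.ofReal (Γ t x) < a → deriv μ (Γ t x) ≤ deriv μ x := fun t ht =>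
    (and_iff_right_of_imp fun _ x hx =>
      ⟨(hΓ' t ht x hx).differentiableAt, (hΓ'' t ht x hx).differentiableAt⟩).trans <|
    forall₂_congr fun x hx => imp_congr_right fun _ =>
      hflow.deriv_deriv_nonpos_iff hpos hdiff hF ht hx
  have of_antitone := fun (hA : AntitoneOn (deriv μ) {x : ℝ | 0 < x ∧ ENNReal.ofReal x < a}) t
      (ht : 0 < t) =>
    (hconcave t ht).mpr fun x hx => hflow.apply_le_of_antitoneOn hFmono hA ht.le hx
  have antitone_of_small := fun δ (hδ : (0 : ℝ) < δ) h =>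
    hflow.antitoneOn_of_apply_le (g := deriv μ) (a := a) hFmono hδ h
  refine ⟨⟨of_antitone, fun h =>
      antitone_of_small 1 one_pos fun t ht => (hconcave t ht.1).mp (h t ht.1)⟩,
    ⟨fun h => ⟨1, one_pos, fun t ht => h t ht.1⟩, fun ⟨δ, hδ, h⟩ =>
      of_antitone (antitone_of_small δ hδ fun t ht => (hconcave t ht.1).mp (h t ht))⟩,
    fun t ht x hx => by rw [(hΓ'' t ht x hx).deriv, (hΓ' t ht x hx).deriv],
    fun h => hflow.strictAntiOn_of_apply_lt hFmono fun t ht x hx ha =>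
      (hflow.deriv_deriv_neg_iff hpos hdiff hF ht hx).mp (h t ht x hx ha)⟩

theorem stmt7 (μ : ℝ → ℝ) (hcont : ContinuousOn μ (Set.Ici 0)) (h0 : μ 0 = 0)
    (hpos : ∀ x > 0, 0 < μ x)
    (hdiff : ∀ x > 0, DifferentiableAt ℝ μ x)
    (hOsgood : ∫⁻ r in Set.Ioo (0:ℝ) 1, ENNReal.ofReal (μ r)⁻¹ = ⊤)
    (hInfty : ∫⁻ r in Set.Ioi (1:ℝ), ENNReal.ofReal (μ r)⁻¹ = ⊤)
    (Γ : ℝ → ℝ → ℝ)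
    (hΓ : ∀ t ≥ 0, ∀ x > 0, 0 < Γ t x ∧ ∫ r in x..Γ t x, (μ r)⁻¹ = t)
    (a : ℝ≥0∞) (ha : 0 < a) :
    (AntitoneOn (deriv μ) {x : ℝ | 0 < x ∧ ENNReal.ofReal x < a} ↔
      (∀ t > 0,
        (∀ x > 0, DifferentiableAt ℝ (fun y => Γ t y) x ∧
          DifferentiableAt ℝ (deriv (fun y => Γ t y)) x) ∧
        (∀ x > 0, ENNReal.ofReal (Γ t x) < a →
          deriv (deriv (fun y => Γ t y)) x ≤ 0))) ∧
    ((∀ t > 0,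
        (∀ x > 0, DifferentiableAt ℝ (fun y => Γ t y) x ∧
          DifferentiableAt ℝ (deriv (fun y => Γ t y)) x) ∧
        (∀ x > 0, ENNReal.ofReal (Γ t x) < a →
          deriv (deriv (fun y => Γ t y)) x ≤ 0)) ↔
      (∃ δ > 0, ∀ t ∈ Set.Ioo (0:ℝ) δ,
        (∀ x > 0, DifferentiableAt ℝ (fun y => Γ t y) x ∧
          DifferentiableAt ℝ (deriv (fun y => Γ t y)) x) ∧
        (∀ x > 0, ENNReal.ofReal (Γ t x) < a →
          deriv (deriv (fun y => Γ t y)) x ≤ 0))) ∧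
    (∀ t > 0, ∀ x > 0,
      deriv (deriv (fun y => Γ t y)) x =
        (deriv μ (Γ t x) - deriv μ x) * deriv (fun y => Γ t y) x / μ x) ∧
    ((∀ t > 0, ∀ x > 0, ENNReal.ofReal (Γ t x) < a →
        deriv (deriv (fun y => Γ t y)) x < 0) →
      StrictAntiOn (deriv μ) {x : ℝ | 0 < x ∧ ENNReal.ofReal x < a}) :=
  stmt7_general μ hpos hdiff Γ hΓ a
end

section
/- Let h : ℝ → (0,∞) be a continuously differentiable, strictly increasing bijection onto (0,∞) with h'(x) > 0 for every x ∈ ℝ, and define μ : (0,∞) → (0,∞) by μ(y) = h'(h⁻¹(y)). Then: (i) for every t ∈ ℝ and every x > 0, ∫ₓ^{h(t + h⁻¹(x))} ds/μ(s) = t; (ii) ∫₀¹ ds/μ(s) = ∞, i.e. μ (extended by μ(0) = 0) satisfies the Osgood condition. -/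
/-!
Since `h' > 0`, the inverse `g` of `h` is differentiable on `(0, ∞)` with `g' = 1 / μ`, so by the
fundamental theorem of calculus `∫ₐᵇ ds / μ(s) = g b - g a` for all `a, b > 0`. Part (i) is the case
`b = h (t + g a)`. For part (ii), `g` is unbounded below (it takes the value `g (1/2) - r` at
`h (g (1/2) - r) ∈ (0, 1/2]`), so the integral over `(0, 1)` exceeds every `r ≥ 0`.
-/

open MeasureTheory Real Filter

open Set

theorem StrictMono.strictMonoOn_of_rightInvOn {α β : Type*} [LinearOrder α] [Preorder β]
    {h : α → β} {g : β → α} {s : Set β} (hh : StrictMono h) (hg : RightInvOn g h s) :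
    StrictMonoOn g s := fun _ hx _ hy hxy ↦
  hh.lt_iff_lt.mp (by rwa [hg hx, hg hy])

section InverseOnIoi

variable {h g : ℝ → ℝ}

theorem continuousAt_of_rightInvOn_Ioi (hpos : ∀ x, 0 < h x) (hmono : StrictMono h)
    (hg1 : ∀ x, g (h x) = x) (hg2 : ∀ y > 0, h (g y) = y) {a : ℝ} (ha : 0 < a) :
    ContinuousAt g a := by
  have himage : g '' Ioi 0 = univ :=
    eq_univ_of_forall fun x ↦ ⟨h x, hpos x, hg1 x⟩
  refine (hmono.strictMonoOn_of_rightInvOn (s := Ioi 0) hg2).continuousAt_of_image_mem_nhds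
    (Ioi_mem_nhds ha) ?_
  rw [himage]
  exact univ_mem

theorem hasDerivAt_of_rightInvOn_Ioi (hpos : ∀ x, 0 < h x) (hC1 : ContDiff ℝ 1 h)
    (hmono : StrictMono h) (hderiv : ∀ x, 0 < deriv h x)
    (hg1 : ∀ x, g (h x) = x) (hg2 : ∀ y > 0, h (g y) = y) {a : ℝ} (ha : 0 < a) :
    HasDerivAt g (deriv h (g a))⁻¹ a :=
  HasDerivAt.of_local_left_inverse (continuousAt_of_rightInvOn_Ioi hpos hmono hg1 hg2 ha)
    ((hC1.differentiable one_ne_zero) (g a)).hasDerivAt (hderiv (g a)).ne'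
    (eventually_of_mem (Ioi_mem_nhds ha) hg2)

theorem continuousOn_inv_deriv_comp_Ioi (hpos : ∀ x, 0 < h x) (hC1 : ContDiff ℝ 1 h)
    (hmono : StrictMono h) (hderiv : ∀ x, 0 < deriv h x)
    (hg1 : ∀ x, g (h x) = x) (hg2 : ∀ y > 0, h (g y) = y) :
    ContinuousOn (fun s ↦ (deriv h (g s))⁻¹) (Ioi 0) := fun a ha ↦
  (((hC1.continuous_deriv le_rfl).continuousAt.comp
    (continuousAt_of_rightInvOn_Ioi hpos hmono hg1 hg2 ha)).inv₀
    (hderiv (g a)).ne').continuousWithinAt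

theorem integral_inv_deriv_comp_eq_sub (hpos : ∀ x, 0 < h x) (hC1 : ContDiff ℝ 1 h)
    (hmono : StrictMono h) (hderiv : ∀ x, 0 < deriv h x)
    (hg1 : ∀ x, g (h x) = x) (hg2 : ∀ y > 0, h (g y) = y) {a b : ℝ} (ha : 0 < a) (hb : 0 < b) :
    ∫ s in a..b, (deriv h (g s))⁻¹ = g b - g a := by
  have hsub : uIcc a b ⊆ Ioi 0 := ordConnected_Ioi.uIcc_subset ha hb
  exact intervalIntegral.integral_eq_sub_of_hasDerivAt
    (fun s hs ↦ hasDerivAt_of_rightInvOn_Ioi hpos hC1 hmono hderiv hg1 hg2 (hsub hs))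
    ((continuousOn_inv_deriv_comp_Ioi hpos hC1 hmono hderiv hg1 hg2).mono hsub).intervalIntegrable

theorem lintegral_Ioc_inv_deriv_comp_eq (hpos : ∀ x, 0 < h x) (hC1 : ContDiff ℝ 1 h)
    (hmono : StrictMono h) (hderiv : ∀ x, 0 < deriv h x)
    (hg1 : ∀ x, g (h x) = x) (hg2 : ∀ y > 0, h (g y) = y) {a b : ℝ} (ha : 0 < a) (hab : a ≤ b) :
    ∫⁻ s in Ioc a b, ENNReal.ofReal (deriv h (g s))⁻¹ = ENNReal.ofReal (g b - g a) := by
  have hcont : ContinuousOn (fun s ↦ (deriv h (g s))⁻¹) (Icc a b) :=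
    (continuousOn_inv_deriv_comp_Ioi hpos hC1 hmono hderiv hg1 hg2).mono
      fun s hs ↦ ha.trans_le hs.1
  rw [← integral_inv_deriv_comp_eq_sub hpos hC1 hmono hderiv hg1 hg2 ha (ha.trans_le hab),
    intervalIntegral.integral_of_le hab, ofReal_integral_eq_lintegral_ofReal]
  · exact (hcont.integrableOn_Icc).mono_set Ioc_subset_Icc_self
  · exact Eventually.of_forall fun s ↦ inv_nonneg.mpr (hderiv (g s)).le

end InverseOnIoi

theorem stmt10_general (h g : ℝ → ℝ) (hpos : ∀ x, 0 < h x)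
    (hC1 : ContDiff ℝ 1 h) (hmono : StrictMono h)
    (hderiv : ∀ x, 0 < deriv h x)
    (hg1 : ∀ x, g (h x) = x) (hg2 : ∀ y > 0, h (g y) = y) :
    (∀ t : ℝ, ∀ x > 0, ∫ s in x..h (t + g x), (deriv h (g s))⁻¹ = t) ∧
    (∫⁻ s in Set.Ioo (0:ℝ) 1, ENNReal.ofReal (deriv h (g s))⁻¹ = ⊤) := by
  constructor
  · intro t x hx
    rw [integral_inv_deriv_comp_eq_sub hpos hC1 hmono hderiv hg1 hg2 hx (hpos _), hg1]
    ring
  · refine ENNReal.eq_top_of_forall_nnreal_le fun r ↦ ?_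
    set b : ℝ := 1 / 2
    set a := h (g b - r)
    have hab : a ≤ b := by
      calc a ≤ h (g b) := hmono.monotone (by simp)
        _ = b := hg2 b (by norm_num)
    calc (r : ENNReal) = ENNReal.ofReal (g b - g a) := by simp [a, hg1]
      _ = ∫⁻ s in Ioc a b, ENNReal.ofReal (deriv h (g s))⁻¹ :=
        (lintegral_Ioc_inv_deriv_comp_eq hpos hC1 hmono hderiv hg1 hg2 (hpos _) hab).symm
      _ ≤ ∫⁻ s in Ioo 0 1, ENNReal.ofReal (deriv h (g s))⁻¹ :=
        lintegral_mono_set fun s hs ↦ ⟨(hpos _).trans hs.1, hs.2.trans_lt (by norm_num)⟩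

theorem stmt10 (h g : ℝ → ℝ) (hpos : ∀ x, 0 < h x)
    (hC1 : ContDiff ℝ 1 h) (hmono : StrictMono h)
    (hderiv : ∀ x, 0 < deriv h x)
    (hsurj : ∀ y > 0, ∃ x, h x = y)
    (hg1 : ∀ x, g (h x) = x) (hg2 : ∀ y > 0, h (g y) = y) :
    (∀ t : ℝ, ∀ x > 0, ∫ s in x..h (t + g x), (deriv h (g s))⁻¹ = t) ∧
    (∫⁻ s in Set.Ioo (0:ℝ) 1, ENNReal.ofReal (deriv h (g s))⁻¹ = ⊤) :=
  stmt10_general h g hpos hC1 hmono hderiv hg1 hg2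
end

section
/- Let μ : [0,∞) → [0,∞) be continuous with μ(0) = 0, twice continuously differentiable on (0,∞), strictly increasing, concave on (0,∞), and positive on (0,∞). Set A(x) = x·μ'(x)/μ(x) for x > 0 and λ(r) = r + log μ(e^{−r}) for r ∈ ℝ. Then: (i) 0 < A(x) ≤ 1 for all x > 0, and A(x) < 1 for all x > 0 if μ is strictly concave; (ii) λ is nondecreasing on ℝ, with λ'(r) = 1 − A(e^{−r}) < 1, and λ is strictly increasing if μ is strictly concave; (iii) x ↦ μ(x)/x is nonincreasing on (0,∞), and strictly decreasing if μ is strictly concave; (iv) log μ is strictly increasing on (0,∞) with (log μ)''(x) < 0 for all x > 0; (v) if moreover μ satisfies the Osgood condition ∫₀¹ dr/μ(r) = ∞, then limsup_{x→0⁺} A(x) = 1. -/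
/-!
Concavity gives the tangent-line inequality `μ x - μ t ≥ μ' x * (x - t)` for `0 < t < x`; letting
`t → 0⁺` yields `x μ' x ≤ μ x`, i.e. `A ≤ 1`, and the same argument run through `x / 2` gives
`A < 1` when `μ'` is strictly decreasing. Everything else is a sign computation for a derivative:
`λ' r = 1 - A (e^{-r})`, `(μ x / x)' = (x μ' x - μ x) / x²` and
`(log μ)'' = (μ'' μ - μ'²) / μ²` with `μ'' ≤ 0 < μ'`. For the Osgood part, if `A ≤ b < 1` near
`0⁺` then `μ x * x^{-b}` is nonincreasing there, so `1 / μ = O(x^{-b})` is integrable on `(0, 1)`.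
-/

open MeasureTheory Real Filter

open Set Topology

section Concave

variable {f : ℝ → ℝ}

theorem ConcaveOn.deriv_pos_of_strictMonoOn (hconc : ConcaveOn ℝ (Ioi 0) f)
    (hmono : StrictMonoOn f (Ioi 0)) {x : ℝ} (hx : 0 < x) (hd : DifferentiableAt ℝ f x) :
    0 < deriv f x := by
  have hx2 : x < 2 * x := by linarith
  have h2x : 2 * x ∈ Ioi (0 : ℝ) := mem_Ioi.2 (by linarith)
  have hslope : 0 < slope f x (2 * x) := by
    rw [slope_def_field]
    exact div_pos (sub_pos.2 (hmono hx h2x hx2)) (by linarith)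
  exact hslope.trans_le (hconc.slope_le_deriv hx h2x hx2 hd)

theorem ConcaveOn.deriv_mul_sub_le (hconc : ConcaveOn ℝ (Ioi 0) f) {t x : ℝ} (ht : 0 < t)
    (htx : t < x) (hd : DifferentiableAt ℝ f x) :
    deriv f x * (x - t) ≤ f x - f t := by
  have hslope := hconc.deriv_le_slope ht (ht.trans htx) htx hd
  rwa [slope_def_field, le_div_iff₀ (sub_pos.2 htx)] at hslope

theorem ConcaveOn.mul_deriv_le_sub (hconc : ConcaveOn ℝ (Ioi 0) f)
    (hc : ContinuousWithinAt f (Ioi 0) 0) {x : ℝ} (hx : 0 < x) (hd : DifferentiableAt ℝ f x) :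
    x * deriv f x ≤ f x - f 0 := by
  have hlim : Tendsto (fun t => (f x - f t) - deriv f x * (x - t)) (𝓝[>] 0)
      (𝓝 ((f x - f 0) - deriv f x * (x - 0))) :=
    (tendsto_const_nhds.sub hc.tendsto).sub
      ((continuous_const.mul (continuous_const.sub continuous_id)).tendsto 0 |>.mono_left
        nhdsWithin_le_nhds)
  have hnonneg : ∀ᶠ t in 𝓝[>] 0, 0 ≤ (f x - f t) - deriv f x * (x - t) := by
    filter_upwards [Ioo_mem_nhdsGT hx] with t ht
    exact sub_nonneg.2 (hconc.deriv_mul_sub_le ht.1 ht.2 hd)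
  have := ge_of_tendsto hlim hnonneg
  linarith

theorem ConcaveOn.mul_deriv_lt_sub (hconc : ConcaveOn ℝ (Ioi 0) f)
    (hc : ContinuousWithinAt f (Ioi 0) 0) (hd : ∀ x > 0, DifferentiableAt ℝ f x)
    (hsa : StrictAntiOn (deriv f) (Ioi 0)) {x : ℝ} (hx : 0 < x) :
    x * deriv f x < f x - f 0 := by
  have ht : 0 < x / 2 := by positivity
  have htx : x / 2 < x := by linarith
  calc x * deriv f x = deriv f x * (x - x / 2) + x / 2 * deriv f x := by ring
    _ < deriv f x * (x - x / 2) + x / 2 * deriv f (x / 2) := by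
      gcongr; exact hsa ht hx htx
    _ ≤ (f x - f (x / 2)) + (f (x / 2) - f 0) :=
      add_le_add (hconc.deriv_mul_sub_le ht htx (hd x hx)) (hconc.mul_deriv_le_sub hc ht (hd _ ht))
    _ = f x - f 0 := by ring

theorem ConcaveOn.deriv_deriv_nonpos {s : Set ℝ} (hconc : ConcaveOn ℝ s f) (hs : IsOpen s)
    (hd : ∀ x ∈ s, DifferentiableAt ℝ f x) {x : ℝ} (hx : x ∈ s) : deriv (deriv f) x ≤ 0 := by
  rw [← derivWithin_of_isOpen hs hx]
  exact (hconc.antitoneOn_deriv hd).derivWithin_nonpos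

end Concave

theorem hasDerivAt_add_log_comp_exp_neg {f : ℝ → ℝ} {r : ℝ} (hd : DifferentiableAt ℝ f (exp (-r)))
    (hf : f (exp (-r)) ≠ 0) :
    HasDerivAt (fun s => s + log (f (exp (-s))))
      (1 - exp (-r) * deriv f (exp (-r)) / f (exp (-r))) r := by
  have hexp : HasDerivAt (fun s => exp (-s)) (-exp (-r)) r := by
    simpa using (hasDerivAt_neg r).exp
  exact ((hasDerivAt_id' r).add ((hd.hasDerivAt.comp r hexp).log hf)).congr_deriv
    (by rw [Function.comp_apply]; ring)

theorem hasDerivAt_deriv_log_comp {f : ℝ → ℝ} {x : ℝ} (hd : ∀ᶠ y in 𝓝 x, DifferentiableAt ℝ f y)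
    (hd' : DifferentiableAt ℝ (deriv f) x) (hx : f x ≠ 0) :
    HasDerivAt (deriv fun y => log (f y))
      ((deriv (deriv f) x * f x - deriv f x ^ 2) / f x ^ 2) x := by
  have hne : ∀ᶠ y in 𝓝 x, f y ≠ 0 := hd.self_of_nhds.continuousAt.eventually_ne hx
  have heq : deriv (fun y => log (f y)) =ᶠ[𝓝 x] fun y => deriv f y / f y := by
    filter_upwards [hd, hne] with y hy hy0 using (hy.hasDerivAt.log hy0).deriv
  exact ((hd'.hasDerivAt.div hd.self_of_nhds.hasDerivAt hx).congr_of_eventuallyEq heq).congr_deriv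
    (by ring)

section DivSelf

variable {f : ℝ → ℝ}

theorem antitoneOn_div_self_of_mul_deriv_le (hd : ∀ x > 0, DifferentiableAt ℝ f x)
    (h : ∀ x > 0, x * deriv f x ≤ f x) : AntitoneOn (fun x => f x / x) (Ioi 0) := by
  have hD : ∀ x > 0, HasDerivAt (fun x => f x / x) ((deriv f x * x - f x * 1) / x ^ 2) x :=
    fun x hx => (hd x hx).hasDerivAt.div (hasDerivAt_id x) hx.ne'
  refine antitoneOn_of_deriv_nonpos (convex_Ioi 0)
    (fun x hx => (hD x hx).continuousAt.continuousWithinAt) ?_ fun x hx => ?_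
  · rw [interior_Ioi]
    exact fun x hx => (hD x hx).differentiableAt.differentiableWithinAt
  · rw [interior_Ioi] at hx
    rw [(hD x hx).deriv]
    have := h x hx
    exact div_nonpos_of_nonpos_of_nonneg (by linarith) (sq_nonneg x)

theorem strictAntiOn_div_self_of_mul_deriv_lt (hd : ∀ x > 0, DifferentiableAt ℝ f x)
    (h : ∀ x > 0, x * deriv f x < f x) : StrictAntiOn (fun x => f x / x) (Ioi 0) := by
  have hD : ∀ x > 0, HasDerivAt (fun x => f x / x) ((deriv f x * x - f x * 1) / x ^ 2) x :=
    fun x hx => (hd x hx).hasDerivAt.div (hasDerivAt_id x) hx.ne'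
  refine strictAntiOn_of_deriv_neg (convex_Ioi 0)
    (fun x hx => (hD x hx).continuousAt.continuousWithinAt) fun x hx => ?_
  rw [interior_Ioi] at hx
  rw [(hD x hx).deriv]
  have := h x hx
  exact div_neg_of_neg_of_pos (by linarith) (pow_pos hx 2)

end DivSelf

section Osgood

variable {f : ℝ → ℝ} {b : ℝ}

theorem antitoneOn_mul_rpow_neg_of_mul_deriv_le {a : ℝ}
    (hd : ∀ x ∈ Ioo 0 a, DifferentiableAt ℝ f x) (h : ∀ x ∈ Ioo 0 a, x * deriv f x ≤ b * f x) :
    AntitoneOn (fun x => f x * x ^ (-b)) (Ioo 0 a) := by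
  have hD : ∀ x ∈ Ioo 0 a, HasDerivAt (fun x => f x * x ^ (-b))
      (deriv f x * x ^ (-b) + f x * (-b * x ^ (-b - 1))) x :=
    fun x hx => (hd x hx).hasDerivAt.mul (hasDerivAt_rpow_const (Or.inl hx.1.ne'))
  refine antitoneOn_of_deriv_nonpos (convex_Ioo 0 a)
    (fun x hx => (hD x hx).continuousAt.continuousWithinAt) ?_ fun x hx => ?_
  · rw [interior_Ioo]
    exact fun x hx => (hD x hx).differentiableAt.differentiableWithinAt
  · rw [interior_Ioo] at hx
    have hpow : x ^ (-b) = x ^ (-b - 1) * x := by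
      rw [← rpow_add_one hx.1.ne']; norm_num
    have hfactor : deriv f x * x ^ (-b) + f x * (-b * x ^ (-b - 1)) =
        x ^ (-b - 1) * (x * deriv f x - b * f x) := by
      rw [hpow]; ring
    rw [(hD x hx).deriv, hfactor]
    exact mul_nonpos_of_nonneg_of_nonpos (rpow_nonneg hx.1.le _) (by linarith [h x hx])

theorem exists_inv_le_rpow_neg_of_mul_deriv_le (hd : ∀ x ∈ Ioo 0 1, DifferentiableAt ℝ f x)
    (hmono : MonotoneOn f (Ioo 0 1)) (hpos : ∀ x ∈ Ioo 0 1, 0 < f x)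
    (h : ∀ᶠ x in 𝓝[>] 0, x * deriv f x ≤ b * f x) :
    ∃ C₁ C₂ : ℝ, ∀ x ∈ Ioo 0 1, (f x)⁻¹ ≤ C₁ * x ^ (-b) + C₂ := by
  obtain ⟨a, ⟨ha0, ha1⟩, hsub⟩ := (mem_nhdsGT_iff_exists_mem_Ioc_Ioo_subset one_pos).1 h
  have hIoo : Ioo 0 a ⊆ Ioo 0 1 := Ioo_subset_Ioo_right ha1
  have hanti := antitoneOn_mul_rpow_neg_of_mul_deriv_le (fun x hx => hd x (hIoo hx)) hsub
  obtain ⟨x₀, hx₀⟩ : (Ioo 0 a).Nonempty := nonempty_Ioo.2 ha0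
  have hfx₀ := hpos x₀ (hIoo hx₀)
  have hc : 0 < f x₀ * x₀ ^ (-b) := mul_pos hfx₀ (rpow_pos_of_pos hx₀.1 _)
  refine ⟨(f x₀ * x₀ ^ (-b))⁻¹, (f x₀)⁻¹, fun x hx => ?_⟩
  have hrpow : 0 < x ^ (-b) := rpow_pos_of_pos hx.1 _
  rcases lt_or_ge x x₀ with hxx₀ | hxx₀
  · have hlow : f x₀ * x₀ ^ (-b) ≤ f x * x ^ (-b) :=
      hanti ⟨hx.1, hxx₀.trans hx₀.2⟩ hx₀ hxx₀.le
    calc (f x)⁻¹ = (f x * x ^ (-b))⁻¹ * x ^ (-b) := by field_simp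
      _ ≤ (f x₀ * x₀ ^ (-b))⁻¹ * x ^ (-b) := by gcongr
      _ ≤ _ := le_add_of_nonneg_right (inv_nonneg.2 hfx₀.le)
  · calc (f x)⁻¹ ≤ (f x₀)⁻¹ := inv_anti₀ hfx₀ (hmono (hIoo hx₀) hx hxx₀)
      _ ≤ _ := le_add_of_nonneg_left (by positivity)

theorem setLIntegral_ofReal_lt_top_of_le_rpow_neg {g : ℝ → ℝ} (hb : b < 1) {C₁ C₂ : ℝ}
    (h : ∀ x ∈ Ioo 0 1, g x ≤ C₁ * x ^ (-b) + C₂) :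
    ∫⁻ x in Ioo 0 1, ENNReal.ofReal (g x) < ⊤ := by
  have hint : IntegrableOn (fun x : ℝ => C₁ * x ^ (-b) + C₂) (Ioo 0 1) :=
    (((intervalIntegral.integrableOn_Ioo_rpow_iff one_pos).2 (by linarith)).const_mul _).add
      (integrableOn_const (by simp))
  refine lt_of_le_of_lt (setLIntegral_mono' measurableSet_Ioo fun x hx => ?_) hint.setLIntegral_lt_top
  exact ENNReal.ofReal_le_ofReal (h x hx)

theorem limsup_mul_deriv_div_eq_one (hd : ∀ x > 0, DifferentiableAt ℝ f x)
    (hmono : MonotoneOn f (Ioi 0)) (hpos : ∀ x > 0, 0 < f x) (hle : ∀ x > 0, x * deriv f x ≤ f x)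
    (hosgood : ∫⁻ x in Ioo 0 1, ENNReal.ofReal (f x)⁻¹ = ⊤) :
    limsup (fun x => x * deriv f x / f x) (𝓝[>] 0) = 1 := by
  have hbound : ∀ᶠ x in 𝓝[>] 0, 0 ≤ x * deriv f x / f x ∧ x * deriv f x / f x ≤ 1 := by
    filter_upwards [self_mem_nhdsWithin] with x hx
    have hderiv : 0 ≤ deriv f x := by
      rw [← derivWithin_of_isOpen isOpen_Ioi hx]; exact hmono.derivWithin_nonneg
    exact ⟨div_nonneg (mul_nonneg (le_of_lt hx) hderiv) (hpos x hx).le,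
      (div_le_one (hpos x hx)).2 (hle x hx)⟩
  refine eq_of_le_of_forall_gt_imp_ge_of_dense
    (limsup_le_of_le (isCoboundedUnder_le_of_eventually_le _ (hbound.mono fun _ h => h.1))
      (hbound.mono fun _ h => h.2)) fun b hb => ?_
  refine le_limsup_of_frequently_le ?_ ⟨1, hbound.mono fun _ h => h.2⟩
  by_contra hsmall
  have hsmall' : ∀ᶠ x in 𝓝[>] 0, x * deriv f x ≤ b * f x := by
    filter_upwards [not_frequently.1 hsmall, self_mem_nhdsWithin] with x hx hx0
    exact ((div_lt_iff₀ (hpos x hx0)).1 (not_le.1 hx)).le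
  obtain ⟨C₁, C₂, hC⟩ := exists_inv_le_rpow_neg_of_mul_deriv_le (fun x hx => hd x hx.1)
    (hmono.mono Ioo_subset_Ioi_self) (fun x hx => hpos x hx.1) hsmall'
  exact (setLIntegral_ofReal_lt_top_of_le_rpow_neg hb hC).ne hosgood

end Osgood

theorem stmt13 (μ : ℝ → ℝ)
    (hc : ContinuousOn μ (Set.Ici 0)) (h0 : μ 0 = 0)
    (hC2 : ContDiffOn ℝ 2 μ (Set.Ioi 0))
    (hmono : StrictMonoOn μ (Set.Ici 0))
    (hconc : ConcaveOn ℝ (Set.Ioi 0) μ)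
    (hpos : ∀ x > 0, 0 < μ x)
    (A lam : ℝ → ℝ)
    (hA : ∀ x, A x = x * deriv μ x / μ x)
    (hlam : ∀ r, lam r = r + Real.log (μ (Real.exp (-r)))) :
    (∀ x > 0, 0 < A x ∧ A x ≤ 1) ∧
    (StrictAntiOn (deriv μ) (Set.Ioi 0) → ∀ x > 0, A x < 1) ∧
    Monotone lam ∧
    (∀ r : ℝ, HasDerivAt lam (1 - A (Real.exp (-r))) r ∧ 1 - A (Real.exp (-r)) < 1) ∧
    (StrictAntiOn (deriv μ) (Set.Ioi 0) → StrictMono lam) ∧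
    AntitoneOn (fun x => μ x / x) (Set.Ioi 0) ∧
    (StrictAntiOn (deriv μ) (Set.Ioi 0) → StrictAntiOn (fun x => μ x / x) (Set.Ioi 0)) ∧
    StrictMonoOn (fun x => Real.log (μ x)) (Set.Ioi 0) ∧
    (∀ x > 0, deriv (deriv (fun y => Real.log (μ y))) x < 0) ∧
    ((∫⁻ r in Set.Ioo (0:ℝ) 1, ENNReal.ofReal (μ r)⁻¹ = ⊤) →
      Filter.limsup A (nhdsWithin 0 (Set.Ioi 0)) = 1) := by
  have hd : ∀ x > 0, DifferentiableAt ℝ μ x := fun x hx =>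
    (hC2.differentiableOn (by norm_num)).differentiableAt (isOpen_Ioi.mem_nhds hx)
  have hc₀ : ContinuousWithinAt μ (Ioi 0) 0 := (hc 0 self_mem_Ici).mono Ioi_subset_Ici_self
  have hmono' : StrictMonoOn μ (Ioi 0) := hmono.mono Ioi_subset_Ici_self
  have hderiv_pos : ∀ x > 0, 0 < deriv μ x := fun x hx =>
    hconc.deriv_pos_of_strictMonoOn hmono' hx (hd x hx)
  have hle : ∀ x > 0, x * deriv μ x ≤ μ x := fun x hx => by
    simpa [h0] using hconc.mul_deriv_le_sub hc₀ hx (hd x hx)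
  have hlt : StrictAntiOn (deriv μ) (Ioi 0) → ∀ x > 0, x * deriv μ x < μ x := fun hsa x hx => by
    simpa [h0] using hconc.mul_deriv_lt_sub hc₀ hd hsa hx
  have hA_pos : ∀ x > 0, 0 < A x := fun x hx => by
    rw [hA]; exact div_pos (mul_pos hx (hderiv_pos x hx)) (hpos x hx)
  have hA_le : ∀ x > 0, A x ≤ 1 := fun x hx => by
    rw [hA]; exact (div_le_one (hpos x hx)).2 (hle x hx)
  have hA_lt : StrictAntiOn (deriv μ) (Ioi 0) → ∀ x > 0, A x < 1 := fun hsa x hx => by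
    rw [hA]; exact (div_lt_one (hpos x hx)).2 (hlt hsa x hx)
  have hlam_deriv : ∀ r, HasDerivAt lam (1 - A (exp (-r))) r := fun r => by
    rw [funext hlam, hA]
    exact hasDerivAt_add_log_comp_exp_neg (hd _ (exp_pos _)) (hpos _ (exp_pos _)).ne'
  refine ⟨fun x hx => ⟨hA_pos x hx, hA_le x hx⟩, hA_lt, ?_,
    fun r => ⟨hlam_deriv r, by linarith [hA_pos _ (exp_pos (-r))]⟩, fun hsa => ?_,
    antitoneOn_div_self_of_mul_deriv_le hd hle,
    fun hsa => strictAntiOn_div_self_of_mul_deriv_lt hd (hlt hsa),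
    fun x hx y hy hxy => log_lt_log (hpos x hx) (hmono' hx hy hxy), fun x hx => ?_,
    fun hosgood => ?_⟩
  · refine monotone_of_deriv_nonneg (fun r => (hlam_deriv r).differentiableAt) fun r => ?_
    rw [(hlam_deriv r).deriv]
    linarith [hA_le _ (exp_pos (-r))]
  · refine strictMono_of_deriv_pos fun r => ?_
    rw [(hlam_deriv r).deriv]
    linarith [hA_lt hsa _ (exp_pos (-r))]
  · have hd₂ : DifferentiableAt ℝ (deriv μ) x :=
      ((hC2.deriv_of_isOpen (m := 1) isOpen_Ioi (by norm_num)).differentiableOn one_ne_zero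
        ).differentiableAt (isOpen_Ioi.mem_nhds hx)
    rw [(hasDerivAt_deriv_log_comp (eventually_of_mem (isOpen_Ioi.mem_nhds hx) hd) hd₂
      (hpos x hx).ne').deriv]
    have hμ'' := hconc.deriv_deriv_nonpos isOpen_Ioi hd hx
    have hμ' := hderiv_pos x hx
    have hμ := hpos x hx
    exact div_neg_of_neg_of_pos (by nlinarith) (by positivity)
  · rw [funext hA]
    exact limsup_mul_deriv_div_eq_one hd hmono'.monotoneOn hpos hle hosgood
end

section
/- Let μ : [0,∞) → [0,∞) be continuous with μ(0) = 0, twice continuously differentiable on (0,∞), strictly increasing and strictly concave on (0,∞), satisfying the Osgood condition ∫₀¹ dr/μ(r) = ∞, and assume lim_{x→0⁺} x·μ'(x)/μ(x) = 1. Define S_μ(x) = ∫₀ˣ μ(s)/s ds. Then: (i) S_μ(x) < ∞ for every x > 0 (μ is Dini-continuous); (ii) S_μ is a strictly increasing, strictly concave MOC on [0,∞); (iii) lim_{x→0⁺} S_μ(x)/μ(x) = 1 and lim_{x→0⁺} S_μ'(x)/μ'(x) = 1 (S_μ and μ lie in the same germ at the origin, as do their derivatives); (iv) if in addition x²·μ''(x)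 − x·μ'(x) + μ(x) ≥ 0 for all x > 0, then x²·S_μ''(x) − x·S_μ'(x) + S_μ(x) ≥ 0 for all x > 0. -/
open MeasureTheory Real Filter Set Topology

/-!
Since `μ(0) = 0` and `μ'` is strictly decreasing, the mean value theorem gives `x μ'(x) < μ(x)`,
so `S' = μ(x)/x` is strictly decreasing and `S` is strictly concave. Near `0` the hypothesis
`x μ'/μ → 1` gives `μ(x)/x ≤ 2 μ'(x)`, and the nonnegative derivative `μ'` is integrable there;
hence `S` is finite. The same limit reads `S'/μ' → 1`, and L'Hôpital's rule turns it into
`S/μ → 1`. Finally `x² S'' - x S' + S = S + x μ' - 2 μ`, a function that tends to `0` at `0` and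
whose derivative is `(x² μ'' - x μ' + μ)/x`.
-/

section

variable {f : ℝ → ℝ} {x : ℝ}

theorem hasDerivAt_div_self (hf : DifferentiableAt ℝ f x) (hx : x ≠ 0) :
    HasDerivAt (fun y => f y / y) ((x * deriv f x - f x) / x ^ 2) x :=
  (hf.hasDerivAt.div (hasDerivAt_id' x) hx).congr_deriv (by ring)

theorem mul_deriv_lt_of_strictAntiOn_deriv (hc : ContinuousOn f (Ici 0)) (h0 : f 0 = 0)
    (hd : DifferentiableOn ℝ f (Ioi 0)) (hconc : StrictAntiOn (deriv f) (Ioi 0))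
    (hx : 0 < x) : x * deriv f x < f x := by
  obtain ⟨c, ⟨hc0, hcx⟩, hslope⟩ :=
    exists_deriv_eq_slope f hx (hc.mono Icc_subset_Ici_self) (hd.mono Ioo_subset_Ioi_self)
  have hfx : f x = x * deriv f c := by
    rw [hslope, h0, sub_zero, sub_zero]
    field_simp
  rw [hfx]
  exact mul_lt_mul_of_pos_left (hconc hc0 hx hcx) hx

theorem strictAntiOn_div_self_of_strictAntiOn_deriv (hc : ContinuousOn f (Ici 0)) (h0 : f 0 = 0)
    (hd : DifferentiableOn ℝ f (Ioi 0)) (hconc : StrictAntiOn (deriv f) (Ioi 0)) :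
    StrictAntiOn (fun x => f x / x) (Ioi 0) := by
  refine strictAntiOn_of_deriv_neg (convex_Ioi 0)
    (hd.continuousOn.div continuousOn_id fun x hx => ne_of_gt hx) fun x hx => ?_
  rw [interior_Ioi] at hx
  rw [(hasDerivAt_div_self (hd.differentiableAt (Ioi_mem_nhds hx)) (ne_of_gt hx)).deriv]
  have := mul_deriv_lt_of_strictAntiOn_deriv hc h0 hd hconc hx
  exact div_neg_of_neg_of_pos (by linarith) (pow_pos hx 2)

theorem eventually_le_two_mul_mul_deriv (hpos : ∀ x > 0, 0 < f x)
    (hlim : Tendsto (fun x => x * deriv f x / f x) (𝓝[>] 0) (𝓝 1)) :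
    ∀ᶠ x in 𝓝[>] 0, f x ≤ 2 * (x * deriv f x) := by
  filter_upwards [hlim.eventually (eventually_gt_nhds one_half_lt_one), self_mem_nhdsWithin]
    with x hx hx0
  rw [lt_div_iff₀ (hpos x hx0)] at hx
  linarith

theorem eventually_deriv_pos (hpos : ∀ x > 0, 0 < f x)
    (hlim : Tendsto (fun x => x * deriv f x / f x) (𝓝[>] 0) (𝓝 1)) :
    ∀ᶠ x in 𝓝[>] 0, 0 < deriv f x := by
  filter_upwards [eventually_le_two_mul_mul_deriv hpos hlim, self_mem_nhdsWithin] with x hle hx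
  exact pos_of_mul_pos_right (by linarith [hpos x hx]) hx.le

theorem integrableOn_Ioc_div_self {δ : ℝ} (hc : ContinuousOn f (Ici 0))
    (hd : DifferentiableOn ℝ f (Ioi 0)) (hnonneg : ∀ x ∈ Ioc 0 δ, 0 ≤ f x)
    (hle : ∀ x ∈ Ioc 0 δ, f x ≤ 2 * (x * deriv f x)) :
    IntegrableOn (fun x => f x / x) (Ioc 0 δ) := by
  have hderiv : ∀ x ∈ Ioo 0 δ, 0 ≤ deriv f x := fun x hx => by
    have hx' := Ioo_subset_Ioc_self hx
    exact nonneg_of_mul_nonneg_right (by linarith [hle x hx', hnonneg x hx']) hx.1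
  have hbound : IntegrableOn (fun x => 2 * deriv f x) (Ioc 0 δ) :=
    (intervalIntegral.integrableOn_deriv_of_nonneg (hc.mono Icc_subset_Ici_self)
      (fun x hx => (hd.differentiableAt (Ioi_mem_nhds hx.1)).hasDerivAt) hderiv).const_mul 2
  refine hbound.mono' (((hd.continuousOn.div continuousOn_id fun x hx => ne_of_gt hx).mono
    Ioc_subset_Ioi_self).aestronglyMeasurable measurableSet_Ioc) ?_
  refine (ae_restrict_iff' measurableSet_Ioc).2 (Eventually.of_forall fun x hx => ?_)
  rw [norm_of_nonneg (div_nonneg (hnonneg x hx) hx.1.le), div_le_iff₀ hx.1]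
  linarith [hle x hx]

theorem intervalIntegrable_div_self (hc : ContinuousOn f (Ici 0))
    (hd : DifferentiableOn ℝ f (Ioi 0)) (hpos : ∀ x > 0, 0 < f x)
    (hlim : Tendsto (fun x => x * deriv f x / f x) (𝓝[>] 0) (𝓝 1)) (hx : 0 < x) :
    IntervalIntegrable (fun s => f s / s) volume 0 x := by
  obtain ⟨δ, hδ, hle⟩ :=
    mem_nhdsGT_iff_exists_Ioc_subset.1 (eventually_le_two_mul_mul_deriv hpos hlim)
  have h0δ : IntervalIntegrable (fun s => f s / s) volume 0 δ :=
    (intervalIntegrable_iff_integrableOn_Ioc_of_le hδ.le).2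
      (integrableOn_Ioc_div_self hc hd (fun y hy => (hpos y hy.1).le) hle)
  refine h0δ.trans (ContinuousOn.intervalIntegrable ?_)
  exact (hd.continuousOn.div continuousOn_id fun y hy => ne_of_gt hy).mono
    fun y hy => lt_of_lt_of_le (lt_min hδ hx) hy.1

theorem tendsto_div_self_div_deriv
    (hlim : Tendsto (fun x => x * deriv f x / f x) (𝓝[>] 0) (𝓝 1)) :
    Tendsto (fun x => f x / x / deriv f x) (𝓝[>] 0) (𝓝 1) := by
  simpa only [inv_div, div_div, inv_one] using hlim.inv₀ one_ne_zero

theorem tendsto_mul_deriv_nhdsGT_zero (hpos : ∀ x > 0, 0 < f x)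
    (hf0 : Tendsto f (𝓝[>] 0) (𝓝 0))
    (hlim : Tendsto (fun x => x * deriv f x / f x) (𝓝[>] 0) (𝓝 1)) :
    Tendsto (fun x => x * deriv f x) (𝓝[>] 0) (𝓝 0) := by
  refine (mul_zero (1 : ℝ) ▸ hlim.mul hf0).congr' ?_
  filter_upwards [self_mem_nhdsWithin] with x hx
  exact div_mul_cancel₀ _ (ne_of_gt (hpos x hx))

end

section

variable {g : ℝ → ℝ}

theorem continuousOn_primitive_Ici (hg : ∀ x > 0, IntervalIntegrable g volume 0 x) :
    ContinuousOn (fun x => ∫ s in (0 : ℝ)..x, g s) (Ici 0) := by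
  intro x hx
  have hx1 : (0 : ℝ) < x + 1 := by linarith [mem_Ici.1 hx]
  have hcont := intervalIntegral.continuousOn_primitive_interval' (hg _ hx1) left_mem_uIcc
  rw [uIcc_of_le hx1.le, ← Ici_inter_Iic] at hcont
  exact (hcont x ⟨hx, by simp⟩).mono_of_mem_nhdsWithin
    (inter_mem_nhdsWithin _ (Iic_mem_nhds (lt_add_one x)))

theorem hasDerivAt_primitive_of_continuousOn_Ioi (hc : ContinuousOn g (Ioi 0))
    (hg : ∀ x > 0, IntervalIntegrable g volume 0 x) {x : ℝ} (hx : 0 < x) :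
    HasDerivAt (fun u => ∫ s in (0 : ℝ)..u, g s) (g x) x :=
  intervalIntegral.integral_hasDerivAt_right (hg x hx)
    (hc.stronglyMeasurableAtFilter isOpen_Ioi x hx) (hc.continuousAt (Ioi_mem_nhds hx))

theorem strictMonoOn_Ici_of_hasDerivAt_pos {F : ℝ → ℝ} (hF : ContinuousOn F (Ici 0))
    (hd : ∀ x > 0, HasDerivAt F (g x) x) (hg : ∀ x > 0, 0 < g x) : StrictMonoOn F (Ici 0) := by
  refine strictMonoOn_of_hasDerivWithinAt_pos (convex_Ici 0) hF (f' := g) (fun x hx => ?_)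
    fun x hx => ?_
  · rw [interior_Ici] at hx ⊢
    exact (hd x hx).hasDerivWithinAt
  · rw [interior_Ici] at hx
    exact hg x hx

theorem strictConcaveOn_Ici_of_hasDerivAt {F : ℝ → ℝ} (hF : ContinuousOn F (Ici 0))
    (hd : ∀ x > 0, HasDerivAt F (g x) x) (hg : StrictAntiOn g (Ioi 0)) :
    StrictConcaveOn ℝ (Ici 0) F := by
  refine StrictAntiOn.strictConcaveOn_of_deriv (convex_Ici 0) hF ?_
  rw [interior_Ici]
  intro x hx y hy hxy
  rw [(hd x hx).deriv, (hd y hy).deriv]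
  exact hg hx hy hxy

theorem nonneg_of_monotoneOn_of_tendsto_nhdsGT_zero (hg : MonotoneOn g (Ioi 0))
    (hlim : Tendsto g (𝓝[>] 0) (𝓝 0)) {x : ℝ} (hx : 0 < x) : 0 ≤ g x :=
  le_of_tendsto hlim (by filter_upwards [Ioo_mem_nhdsGT hx] with y hy using hg hy.1 hx hy.2.le)

end

section

variable {f S : ℝ → ℝ} {x : ℝ}

theorem deriv_deriv_eq_of_hasDerivAt_div_self (hS : ∀ x > 0, HasDerivAt S (f x / x) x)
    (hd : DifferentiableOn ℝ f (Ioi 0)) (hx : 0 < x) :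
    deriv (deriv S) x = (x * deriv f x - f x) / x ^ 2 := by
  have hdiv := hasDerivAt_div_self (hd.differentiableAt (Ioi_mem_nhds hx)) (ne_of_gt hx)
  refine (hdiv.congr_of_eventuallyEq ?_).deriv
  filter_upwards [Ioi_mem_nhds hx] with y hy using (hS y hy).deriv

theorem monotoneOn_add_mul_deriv_sub_two_mul (hS : ∀ x > 0, HasDerivAt S (f x / x) x)
    (hf : ContDiffOn ℝ 2 f (Ioi 0))
    (H : ∀ x > 0, 0 ≤ x ^ 2 * deriv (deriv f) x - x * deriv f x + f x) :
    MonotoneOn (fun x => S x + x * deriv f x - 2 * f x) (Ioi 0) := by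
  have hd : DifferentiableOn ℝ f (Ioi 0) := hf.differentiableOn two_ne_zero
  have hdd : DifferentiableOn ℝ (deriv f) (Ioi 0) :=
    (hf.deriv_of_isOpen isOpen_Ioi one_add_one_eq_two.le).differentiableOn one_ne_zero
  have hT : ∀ x > 0, HasDerivAt (fun x => S x + x * deriv f x - 2 * f x)
      ((x ^ 2 * deriv (deriv f) x - x * deriv f x + f x) / x) x := fun x hx => by
    have hf' := (hd.differentiableAt (Ioi_mem_nhds hx)).hasDerivAt
    have hf'' := (hdd.differentiableAt (Ioi_mem_nhds hx)).hasDerivAt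
    refine (((hS x hx).add ((hasDerivAt_id' x).mul hf'')).sub (hf'.const_mul 2)).congr_deriv ?_
    field_simp
    ring
  refine monotoneOn_of_hasDerivWithinAt_nonneg (convex_Ioi 0)
    (f' := fun x => (x ^ 2 * deriv (deriv f) x - x * deriv f x + f x) / x)
    (fun x hx => (hT x hx).continuousAt.continuousWithinAt) (fun x hx => ?_) (fun x hx => ?_)
  · rw [interior_Ioi] at hx ⊢
    exact (hT x hx).hasDerivWithinAt
  · rw [interior_Ioi] at hx
    exact div_nonneg (H x hx) hx.le

theorem euler_nonneg_of_hasDerivAt_div_self (hS : ∀ x > 0, HasDerivAt S (f x / x) x)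
    (hS0 : Tendsto S (𝓝[>] 0) (𝓝 0)) (hf : ContDiffOn ℝ 2 f (Ioi 0))
    (hf0 : Tendsto f (𝓝[>] 0) (𝓝 0)) (hxf0 : Tendsto (fun x => x * deriv f x) (𝓝[>] 0) (𝓝 0))
    (H : ∀ x > 0, 0 ≤ x ^ 2 * deriv (deriv f) x - x * deriv f x + f x) (hx : 0 < x) :
    0 ≤ x ^ 2 * deriv (deriv S) x - x * deriv S x + S x := by
  have hT0 : Tendsto (fun x => S x + x * deriv f x - 2 * f x) (𝓝[>] 0) (𝓝 0) := by
    simpa only [add_zero, mul_zero, sub_zero] using (hS0.add hxf0).sub (hf0.const_mul 2)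
  have hT := nonneg_of_monotoneOn_of_tendsto_nhdsGT_zero
    (monotoneOn_add_mul_deriv_sub_two_mul hS hf H) hT0 hx
  rw [deriv_deriv_eq_of_hasDerivAt_div_self hS (hf.differentiableOn two_ne_zero) hx,
    (hS x hx).deriv]
  convert hT using 1
  field_simp
  ring

end

theorem stmt16_general (μ : ℝ → ℝ)
    (hc : ContinuousOn μ (Set.Ici 0)) (h0 : μ 0 = 0)
    (hC2 : ContDiffOn ℝ 2 μ (Set.Ioi 0))
    (hmono : StrictMonoOn μ (Set.Ici 0))
    (hconc : StrictAntiOn (deriv μ) (Set.Ioi 0))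
    (hlim : Tendsto (fun x => x * deriv μ x / μ x) (nhdsWithin 0 (Set.Ioi 0)) (nhds 1))
    (S : ℝ → ℝ) (hS : ∀ x, S x = ∫ s in (0:ℝ)..x, μ s / s) :
    (∀ x > 0, IntervalIntegrable (fun s => μ s / s) volume 0 x) ∧
    ContinuousOn S (Set.Ici 0) ∧ S 0 = 0 ∧
    StrictMonoOn S (Set.Ici 0) ∧ StrictConcaveOn ℝ (Set.Ici 0) S ∧
    Tendsto (fun x => S x / μ x) (nhdsWithin 0 (Set.Ioi 0)) (nhds 1) ∧
    Tendsto (fun x => deriv S x / deriv μ x) (nhdsWithin 0 (Set.Ioi 0)) (nhds 1) ∧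
    ((∀ x > 0, 0 ≤ x ^ 2 * deriv (deriv μ) x - x * deriv μ x + μ x) →
      ∀ x > 0, 0 ≤ x ^ 2 * deriv (deriv S) x - x * deriv S x + S x) := by
  have hd : DifferentiableOn ℝ μ (Ioi 0) := hC2.differentiableOn two_ne_zero
  have hpos : ∀ x > 0, 0 < μ x := fun x hx => h0 ▸ hmono self_mem_Ici (mem_Ici.2 hx.le) hx
  have hint : ∀ x > 0, IntervalIntegrable (fun s => μ s / s) volume 0 x :=
    fun x hx => intervalIntegrable_div_self hc hd hpos hlim hx
  have hSd : ∀ x > 0, HasDerivAt S (μ x / x) x := fun x hx => funext hS ▸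
    hasDerivAt_primitive_of_continuousOn_Ioi
      (hd.continuousOn.div continuousOn_id fun y hy => ne_of_gt hy) hint hx
  have hScont : ContinuousOn S (Ici 0) := funext hS ▸ continuousOn_primitive_Ici hint
  have hS0 : S 0 = 0 := by rw [hS, intervalIntegral.integral_same]
  have hμ0 : Tendsto μ (𝓝[>] 0) (𝓝 0) := by
    simpa only [h0] using ((hc 0 self_mem_Ici).mono Ioi_subset_Ici_self).tendsto
  have hS0' : Tendsto S (𝓝[>] 0) (𝓝 0) := by
    simpa only [hS0] using ((hScont 0 self_mem_Ici).mono Ioi_subset_Ici_self).tendsto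
  have hratio : Tendsto (fun x => μ x / x / deriv μ x) (𝓝[>] 0) (𝓝 1) :=
    tendsto_div_self_div_deriv hlim
  refine ⟨hint, hScont, hS0,
    strictMonoOn_Ici_of_hasDerivAt_pos hScont hSd fun x hx => div_pos (hpos x hx) hx,
    strictConcaveOn_Ici_of_hasDerivAt hScont hSd
      (strictAntiOn_div_self_of_strictAntiOn_deriv hc h0 hd hconc), ?_, ?_, fun H x hx =>
    euler_nonneg_of_hasDerivAt_div_self hSd hS0' hC2 hμ0
      (tendsto_mul_deriv_nhdsGT_zero hpos hμ0 hlim) H hx⟩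
  · refine HasDerivAt.lhopital_zero_nhdsGT (eventually_nhdsWithin_of_forall hSd)
      (eventually_nhdsWithin_of_forall fun x hx =>
        (hd.differentiableAt (Ioi_mem_nhds hx)).hasDerivAt) ?_ hS0' hμ0 hratio
    exact (eventually_deriv_pos hpos hlim).mono fun x hx => ne_of_gt hx
  · refine hratio.congr' (eventually_nhdsWithin_of_forall fun x hx => ?_)
    simp only [(hSd x hx).deriv]

theorem stmt16 (μ : ℝ → ℝ)
    (hc : ContinuousOn μ (Set.Ici 0)) (h0 : μ 0 = 0)
    (hC2 : ContDiffOn ℝ 2 μ (Set.Ioi 0))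
    (hmono : StrictMonoOn μ (Set.Ici 0))
    (hconc : StrictAntiOn (deriv μ) (Set.Ioi 0))
    (hOsgood : ∫⁻ r in Set.Ioo (0:ℝ) 1, ENNReal.ofReal (μ r)⁻¹ = ⊤)
    (hlim : Tendsto (fun x => x * deriv μ x / μ x) (nhdsWithin 0 (Set.Ioi 0)) (nhds 1))
    (S : ℝ → ℝ) (hS : ∀ x, S x = ∫ s in (0:ℝ)..x, μ s / s) :
    (∀ x > 0, IntervalIntegrable (fun s => μ s / s) volume 0 x) ∧
    ContinuousOn S (Set.Ici 0) ∧ S 0 = 0 ∧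
    StrictMonoOn S (Set.Ici 0) ∧ StrictConcaveOn ℝ (Set.Ici 0) S ∧
    Tendsto (fun x => S x / μ x) (nhdsWithin 0 (Set.Ioi 0)) (nhds 1) ∧
    Tendsto (fun x => deriv S x / deriv μ x) (nhdsWithin 0 (Set.Ioi 0)) (nhds 1) ∧
    ((∀ x > 0, 0 ≤ x ^ 2 * deriv (deriv μ) x - x * deriv μ x + μ x) →
      ∀ x > 0, 0 ≤ x ^ 2 * deriv (deriv S) x - x * deriv S x + S x) :=
  stmt16_general μ hc h0 hC2 hmono hconc hlim S hS
end

section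
/- Let μ : [0,∞) → [0,∞) be continuous with μ(0) = 0, twice continuously differentiable on (0,∞), strictly increasing, concave, and positive on (0,∞), satisfying the Osgood condition, and assume λ(r) = r + log μ(e^{−r}) satisfies λ'' < 0 on all of ℝ, so that ε := λ'/2 : ℝ → (0,1/2) is strictly decreasing with ε(r) → 0 as r → ∞. Let ε̄ : ℝ → (0,1/2) be continuously differentiable, strictly decreasing, with ε̄(r) → 0 as r → ∞ and ε̄(r) ≥ ε(r) for all r ∈ ℝ. Fix C > 0 and define α on the range of ε by α(ε(r)) = C·exp(λ(r) − 2r·ε(r)), and ᾱ on the range of ε̄ by ᾱ(ε̄(r)) = C·exp(λ(r) − 2r·ε̄(r)). Then ᾱ(x) ≤ α(x) for every x lying in both ranges. (That is, overestimating ε leads to an underestimate of α.) -/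
/-!
If `x = ε(r) = ε̄(r')`, then `ε(r') ≤ ε̄(r') = ε(r)`, so `r ≤ r'`. On `[r, ∞)` we have
`λ' = 2ε ≤ 2x`, so `t ↦ λ(t) - 2tx` is nonincreasing there, whence
`ᾱ(x) = C e^{λ(r') - 2r'x} ≤ C e^{λ(r) - 2rx} = α(x)`.
-/

open MeasureTheory Real Filter

lemma differentiable_add_log_comp_exp_neg {μ : ℝ → ℝ} (hμ : DifferentiableOn ℝ μ (Set.Ioi 0))
    (hpos : ∀ x > 0, 0 < μ x) : Differentiable ℝ fun r => r + log (μ (exp (-r))) := by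
  intro r
  have hμr : DifferentiableAt ℝ μ (exp (-r)) :=
    hμ.differentiableAt (isOpen_Ioi.mem_nhds (exp_pos (-r)))
  exact differentiableAt_id.add
    ((hμr.comp r (differentiableAt_id.neg.exp)).log (hpos _ (exp_pos (-r))).ne')

lemma sub_mul_le_sub_mul_of_deriv_le {f : ℝ → ℝ} (hf : Differentiable ℝ f) {a b c : ℝ}
    (hab : a ≤ b) (hderiv : ∀ t > a, deriv f t ≤ c) : f b - c * b ≤ f a - c * a := by
  have := (convex_Ici a).image_sub_le_mul_sub_of_deriv_le hf.continuous.continuousOn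
    hf.differentiableOn (fun t ht => hderiv t (by simpa using ht)) a Set.self_mem_Ici b hab hab
  linarith

theorem stmt18_general (μ : ℝ → ℝ)
    (hC2 : ContDiffOn ℝ 2 μ (Set.Ioi 0))
    (hpos : ∀ x > 0, 0 < μ x)
    (lam eps : ℝ → ℝ)
    (hlam : ∀ r, lam r = r + Real.log (μ (Real.exp (-r))))
    (heps : ∀ r, eps r = deriv lam r / 2)
    (hepsanti : StrictAnti eps)
    (epsbar : ℝ → ℝ)
    (hge : ∀ r : ℝ, eps r ≤ epsbar r)
    (C : ℝ) (hC : 0 < C)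
    (α αbar : ℝ → ℝ)
    (hα : ∀ r : ℝ, α (eps r) = C * Real.exp (lam r - 2 * r * eps r))
    (hαbar : ∀ r : ℝ, αbar (epsbar r) = C * Real.exp (lam r - 2 * r * epsbar r)) :
    ∀ x : ℝ, (∃ r, eps r = x) → (∃ r, epsbar r = x) → αbar x ≤ α x := by
  rintro x ⟨r, rfl⟩ ⟨r', hr'⟩
  have hrr' : r ≤ r' := hepsanti.le_iff_ge.mp (hr' ▸ hge r')
  have hlam_diff : Differentiable ℝ lam := funext hlam ▸
    differentiable_add_log_comp_exp_neg (hC2.differentiableOn (by norm_num)) hpos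
  have key := sub_mul_le_sub_mul_of_deriv_le hlam_diff hrr' (c := 2 * eps r) fun t ht => by
    linarith [heps t, hepsanti ht]
  rw [hα, ← hr', hαbar, hr']
  exact mul_le_mul_of_nonneg_left (exp_le_exp.mpr (by linarith)) hC.le

theorem stmt18 (μ : ℝ → ℝ)
    (hc : ContinuousOn μ (Set.Ici 0)) (h0 : μ 0 = 0)
    (hC2 : ContDiffOn ℝ 2 μ (Set.Ioi 0))
    (hmono : StrictMonoOn μ (Set.Ici 0))
    (hconc : ConcaveOn ℝ (Set.Ioi 0) μ)
    (hpos : ∀ x > 0, 0 < μ x)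
    (hOsgood : ∫⁻ r in Set.Ioo (0:ℝ) 1, ENNReal.ofReal (μ r)⁻¹ = ⊤)
    (lam eps : ℝ → ℝ)
    (hlam : ∀ r, lam r = r + Real.log (μ (Real.exp (-r))))
    (heps : ∀ r, eps r = deriv lam r / 2)
    (hlam'' : ∀ r : ℝ, deriv (deriv lam) r < 0)
    (hepsrange : ∀ r : ℝ, eps r ∈ Set.Ioo (0:ℝ) (1/2))
    (hepsanti : StrictAnti eps)
    (hepslim : Tendsto eps atTop (nhds 0))
    (epsbar : ℝ → ℝ)
    (hbarC1 : ContDiff ℝ 1 epsbar)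
    (hbarrange : ∀ r : ℝ, epsbar r ∈ Set.Ioo (0:ℝ) (1/2))
    (hbaranti : StrictAnti epsbar)
    (hbarlim : Tendsto epsbar atTop (nhds 0))
    (hge : ∀ r : ℝ, eps r ≤ epsbar r)
    (C : ℝ) (hC : 0 < C)
    (α αbar : ℝ → ℝ)
    (hα : ∀ r : ℝ, α (eps r) = C * Real.exp (lam r - 2 * r * eps r))
    (hαbar : ∀ r : ℝ, αbar (epsbar r) = C * Real.exp (lam r - 2 * r * epsbar r)) :
    ∀ x : ℝ, (∃ r, eps r = x) → (∃ r, epsbar r = x) → αbar x ≤ α x :=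
  stmt18_general μ hC2 hpos lam eps hlam heps hepsanti epsbar hge C hC α αbar hα hαbar
end
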